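/- arXiv:1003.0580 — 6 statements merged into one kernel-verified Lean document; each statement's English description precedes it below -/
import Mathlib

section
/- There exists a constant κ₀ ∈ [1, ∞), depending only on n, such that for every Calderón–Zygmund set R ∈ ℛ one has B(x_R, r_R) ⊆ R ⊆ B(x_R, κ₀ r_R). -/
open MeasureTheory Set Filter
open scoped ENNReal NNReal Topology

noncomputable section

/-- The `ax+b`-group `S = ℝⁿ ⋉ ℝ`, as a measure space with its right Haar
measure `ρ`, which is Lebesgue measure `dx dt` on `ℝⁿ × ℝ`. -/
abbrev Sp (n : ℕ) : Type := (Fin n → ℝ) × ℝ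

/-- `Q` is a dyadic cube in `ℝⁿ` with side length `L` and center `c`. -/
def IsDyadicCube (n : ℕ) (Q : Set (Fin n → ℝ)) (L : ℝ) (c : Fin n → ℝ) : Prop :=
  ∃ (k : ℤ) (m : Fin n → ℤ), L = 2 ^ k ∧
    Q = {x | ∀ i, (m i : ℝ) * 2 ^ k ≤ x i ∧ x i < ((m i : ℝ) + 1) * 2 ^ k} ∧
    c = fun i => ((m i : ℝ) + 1 / 2) * 2 ^ k

/-- Admissibility of the parameters `(Q, L, c, t, r)` of a Calderón–Zygmund set:
`Q` is a dyadic cube with side length `L` and center `c`, `r > 0`, and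
`e² eᵗ r ≤ L < e⁸ eᵗ r` if `r < 1`, while `eᵗ e^{2r} ≤ L < eᵗ e^{8r}` if `r ≥ 1`. -/
def CZParam (n : ℕ) (Q : Set (Fin n → ℝ)) (L : ℝ) (c : Fin n → ℝ) (t r : ℝ) : Prop :=
  IsDyadicCube n Q L c ∧ 0 < r ∧
    (r < 1 → Real.exp 2 * Real.exp t * r ≤ L ∧ L < Real.exp 8 * Real.exp t * r) ∧
    (1 ≤ r → Real.exp t * Real.exp (2 * r) ≤ L ∧ L < Real.exp t * Real.exp (8 * r))

/-- The set `Q × [t - r, t + r)` in `S`. -/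
def czSet (n : ℕ) (Q : Set (Fin n → ℝ)) (t r : ℝ) : Set (Sp n) :=
  Q ×ˢ Set.Ico (t - r) (t + r)

/-- `R` is a Calderón–Zygmund set, i.e. a member of the family `ℛ`. -/
def IsCZSet (n : ℕ) (R : Set (Sp n)) : Prop :=
  ∃ Q L c t r, CZParam n Q L c t r ∧ R = czSet n Q t r

/-- Inverse hyperbolic cosine. -/
def arcoshR (x : ℝ) : ℝ := Real.log (x + Real.sqrt (x ^ 2 - 1))

/-- The left-invariant Riemannian (hyperbolic) metric on `S`, given by
`cosh d((x,t),(x',t')) = (e^{t'-t} + e^{t-t'} + e^{-t-t'} |x-x'|²) / 2`. -/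
def hypDist (n : ℕ) (p q : Sp n) : ℝ :=
  arcoshR ((Real.exp (q.2 - p.2) + Real.exp (p.2 - q.2) +
    Real.exp (-p.2 - q.2) * (∑ i, (p.1 i - q.1 i) ^ 2)) / 2)

/-- The open ball of center `p` and radius `r` for the hyperbolic metric. -/
def hypBall (n : ℕ) (p : Sp n) (r : ℝ) : Set (Sp n) := {q | hypDist n p q < r}

/-- The maximal function associated with a family `𝒜` of subsets of `S`:
`x ↦ sup { ρ(R)⁻¹ ∫_R |f| dρ : R ∈ 𝒜, x ∈ R }`. -/
def maximalFn (n : ℕ) (𝒜 : Set (Set (Sp n))) (f : Sp n → ℝ) (x : Sp n) : ℝ≥0∞ :=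
  ⨆ R ∈ 𝒜, ⨆ (_ : x ∈ R), (volume R)⁻¹ * ∫⁻ y in R, ‖f y‖₊ ∂volume

/-- The sharp maximal function associated with a family `𝒜` of subsets of `S`:
`x ↦ sup { ρ(R)⁻¹ ∫_R |f - f_R| dρ : R ∈ 𝒜, x ∈ R }`, where `f_R = ρ(R)⁻¹ ∫_R f dρ`. -/
def sharpFn (n : ℕ) (𝒜 : Set (Set (Sp n))) (f : Sp n → ℝ) (x : Sp n) : ℝ≥0∞ :=
  ⨆ R ∈ 𝒜, ⨆ (_ : x ∈ R), (volume R)⁻¹ *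
    ∫⁻ y in R, ENNReal.ofReal |f y - (volume R).toReal⁻¹ * ∫ z in R, f z ∂volume| ∂volume

/-- The `L^p`-norm (`p ∈ (0,∞]`) of an `ℝ≥0∞`-valued function. -/
def lpNormE {α : Type*} [MeasurableSpace α] (g : α → ℝ≥0∞) (p : ℝ≥0∞)
    (μ : Measure α) : ℝ≥0∞ :=
  if p = ∞ then essSup g μ else (∫⁻ x, g x ^ p.toReal ∂μ) ^ (1 / p.toReal)

/-- `M` is a parent of `R`: both are Calderón–Zygmund sets, `M` can be decomposed into
`k` pairwise disjoint Calderón–Zygmund sets (`k = 2` or `k = 2ⁿ`) one of which is `R`,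
and `(3/2) ρ(R) ≤ ρ(M) ≤ max{3, 2ⁿ} ρ(R)`. -/
def IsParent (n : ℕ) (M R : Set (Sp n)) : Prop :=
  IsCZSet n M ∧ IsCZSet n R ∧
    (∃ k : ℕ, (k = 2 ∨ k = 2 ^ n) ∧ ∃ Rs : Fin k → Set (Sp n),
      (∀ i, IsCZSet n (Rs i)) ∧ Pairwise (Function.onFun Disjoint Rs) ∧
      M = ⋃ i, Rs i ∧ ∃ i, Rs i = R) ∧
    (3 / 2 : ℝ≥0∞) * volume R ≤ volume M ∧
    volume M ≤ (max 3 (2 ^ n) : ℕ) * volume R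

/-- A dyadic grid on `S`: a collection `{𝒟_j}_{j ∈ ℤ}` of partitions of `S` into
pairwise disjoint Calderón–Zygmund sets with the nesting, parent, splitting and
limiting properties (i)–(v) of Theorem 3.1. -/
def IsDyadicGrid (n : ℕ) (D : ℤ → Set (Set (Sp n))) : Prop :=
  (∀ j, ∀ R ∈ D j, IsCZSet n R) ∧
  (∀ j, (D j).PairwiseDisjoint id) ∧
  (∀ j, ⋃₀ D j = Set.univ) ∧
  (∀ l k : ℤ, l ≤ k → ∀ R ∈ D l, ∀ R' ∈ D k, R ⊆ R' ∨ R ∩ R' = ∅) ∧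
  (∀ j, ∀ R ∈ D j, ∃! R', R' ∈ D (j + 1) ∧ R ⊆ R') ∧
  (∀ j, ∀ R ∈ D j, ∀ R' ∈ D (j + 1), R ⊆ R' → volume R' ≤ 2 ^ n * volume R) ∧
  (∀ j, ∀ R ∈ D j, ∃ k : ℕ, (k = 2 ∨ k = 2 ^ n) ∧ ∃ Rs : Fin k → Set (Sp n),
    (∀ i, Rs i ∈ D (j - 1)) ∧ Pairwise (Function.onFun Disjoint Rs) ∧ R = ⋃ i, Rs i ∧
    ∀ i, volume R / 2 ^ n ≤ volume (Rs i) ∧ volume (Rs i) ≤ (2 / 3 : ℝ≥0∞) * volume R) ∧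
  (∀ x : Sp n, ∀ Rx : ℤ → Set (Sp n), (∀ j, Rx j ∈ D j ∧ x ∈ Rx j) →
    Tendsto (fun j => volume (Rx j)) atBot (nhds 0) ∧
    Tendsto (fun j => volume (Rx j)) atTop (nhds ⊤))

/-- `a` is an `H¹`-atom supported in a set of the family `𝒜`: `a ∈ L¹` is supported in
some `R ∈ 𝒜`, `‖a‖_∞ ≤ ρ(R)⁻¹` and `∫_S a dρ = 0`. -/
def IsAtomIn (n : ℕ) (𝒜 : Set (Set (Sp n))) (a : Sp n → ℂ) : Prop :=
  ∃ R ∈ 𝒜, Function.support a ⊆ R ∧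
    (∀ᵐ x ∂(volume : Measure (Sp n)), ‖a x‖ ≤ (volume R).toReal⁻¹) ∧
    Integrable a volume ∧ ∫ x, a x ∂(volume : Measure (Sp n)) = 0

/-- `g = ∑_j lam_j a_j` is an atomic decomposition of `g` with atoms supported in sets of
the family `𝒜`: the `a_j` are atoms, `∑_j |lam_j| < ∞` and the series converges to `g`
in `L¹`. -/
def IsAtomicDecomp (n : ℕ) (𝒜 : Set (Set (Sp n))) (g : Sp n → ℂ)
    (lam : ℕ → ℂ) (a : ℕ → Sp n → ℂ) : Prop :=
  Integrable g volume ∧ (∀ j, IsAtomIn n 𝒜 (a j)) ∧ Summable (fun j => ‖lam j‖) ∧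
    Tendsto (fun N => ∫ x, ‖g x - ∑ j ∈ Finset.range N, lam j * a j x‖ ∂volume)
      atTop (nhds 0)

/-- The atomic `H¹`-norm of `g` associated with the family `𝒜`: the infimum of
`∑_j |lam_j|` over all atomic decompositions of `g` with atoms supported in sets of `𝒜`. -/
def H1Norm (n : ℕ) (𝒜 : Set (Set (Sp n))) (g : Sp n → ℂ) : ℝ :=
  sInf {s : ℝ | ∃ lam a, IsAtomicDecomp n 𝒜 g lam a ∧ s = ∑' j, ‖lam j‖}

end

private lemma my_lt_cosh_of_arcoshR_lt {y r : ℝ} (hy : 1 ≤ y)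
    (h : Real.log (y + Real.sqrt (y ^ 2 - 1)) < r) : y < Real.cosh r := by
  set s := Real.sqrt (y ^ 2 - 1) with hs
  have hs0 : 0 ≤ s := Real.sqrt_nonneg _
  have hssq : s ^ 2 = y ^ 2 - 1 := Real.sq_sqrt (by nlinarith)
  have hu1 : (1 : ℝ) ≤ y + s := by linarith
  have hu : y + s < Real.exp r := by
    have h2 := Real.exp_lt_exp.mpr h
    rwa [Real.exp_log (by linarith)] at h2
  have hE1 : Real.exp r * Real.exp (-r) = 1 := by
    rw [← Real.exp_add]; simp
  have hprod : (y + s) * (y - s) = 1 := by nlinarith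
  have hE'pos : 0 < Real.exp (-r) := Real.exp_pos _
  rw [Real.cosh_eq]
  nlinarith [mul_pos (sub_pos.mpr hu) (show (0:ℝ) < (y + s) * Real.exp r - 1 by nlinarith)]

private lemma my_arcoshR_le_sub_add {y : ℝ} (hy : 1 ≤ y) :
    Real.log (y + Real.sqrt (y ^ 2 - 1)) ≤ (y - 1) + Real.sqrt (y ^ 2 - 1) := by
  have h := Real.log_le_sub_one_of_pos
    (show 0 < y + Real.sqrt (y ^ 2 - 1) by positivity)
  linarith

private lemma my_arcoshR_le_log_two_mul {y : ℝ} (hy : 1 ≤ y) :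
    Real.log (y + Real.sqrt (y ^ 2 - 1)) ≤ Real.log (2 * y) := by
  have h1 : Real.sqrt (y ^ 2 - 1) ≤ y := by
    calc Real.sqrt (y ^ 2 - 1) ≤ Real.sqrt (y ^ 2) := Real.sqrt_le_sqrt (by nlinarith)
    _ = y := by rw [Real.sqrt_sq (by linarith)]
  have hs0 : 0 ≤ Real.sqrt (y ^ 2 - 1) := Real.sqrt_nonneg _
  exact Real.log_le_log (by linarith) (by linarith)

private lemma my_exp_sub_one_le {r : ℝ} : Real.exp r - 1 ≤ r * Real.exp r := by
  have h1 : (-r) + 1 ≤ Real.exp (-r) := Real.add_one_le_exp (-r)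
  have h2 : Real.exp (-r) * Real.exp r = 1 := by rw [← Real.exp_add]; simp
  nlinarith [Real.exp_pos r]


set_option maxHeartbeats 1600000 in
/-- There exists `κ₀ ∈ [1, ∞)`, depending only on `n`, such that for every
Calderón–Zygmund set `R ∈ ℛ` one has `B(x_R, r_R) ⊆ R ⊆ B(x_R, κ₀ r_R)`. -/
theorem exists_kappa_ball_subset_czSet_subset_ball (n : ℕ) (hn : 1 ≤ n) :
    ∃ κ₀ : ℝ, 1 ≤ κ₀ ∧ ∀ (Q : Set (Fin n → ℝ)) (L : ℝ) (c : Fin n → ℝ) (t r : ℝ),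
      CZParam n Q L c t r →
        hypBall n (c, t) r ⊆ czSet n Q t r ∧
        czSet n Q t r ⊆ hypBall n (c, t) (κ₀ * r) := by
  refine ⟨20 + 2 * n + n * Real.exp 17, ?_, ?_⟩
  · have h17 : 0 < Real.exp 17 := Real.exp_pos _
    have hn0 : (0:ℝ) ≤ n := Nat.cast_nonneg n
    nlinarith
  rintro Q L c t r ⟨⟨k, m, hLk, hQ, hc⟩, hr0, hsmall, hbig⟩
  have hL0 : 0 < L := by rw [hLk]; positivity
  have hE1 : (1:ℝ) ≤ Real.exp r := Real.one_le_exp hr0.le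
  have hEE' : Real.exp r * Real.exp (-r) = 1 := by rw [← Real.exp_add]; simp
  have hE'pos : (0:ℝ) < Real.exp (-r) := Real.exp_pos _
  have hTpos : (0:ℝ) < Real.exp t := Real.exp_pos _
  have hexp1 : Real.exp 1 < 2.7182818286 := Real.exp_one_lt_d9
  have hexp1' : (2:ℝ) < Real.exp 1 := by
    linarith [Real.exp_one_gt_d9]
  -- half-side bound used for the first inclusion
  have hhalf : Real.exp t * (Real.exp r - 1) ≤ L / 2 := by
    rcases lt_or_ge r 1 with h1 | h1
    · obtain ⟨hlo, _⟩ := hsmall h1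
      have hEe : Real.exp r ≤ Real.exp 1 := Real.exp_le_exp.mpr h1.le
      have he2 : Real.exp 1 * Real.exp 1 = Real.exp 2 := by
        rw [← Real.exp_add]; norm_num
      have hkey : Real.exp r - 1 ≤ r * Real.exp r := my_exp_sub_one_le
      have a1 : Real.exp t * (Real.exp r - 1) ≤ Real.exp t * (r * Real.exp r) :=
        mul_le_mul_of_nonneg_left hkey hTpos.le
      have a2 : Real.exp t * (r * Real.exp r) ≤ Real.exp t * (r * Real.exp 1) :=
        mul_le_mul_of_nonneg_left (mul_le_mul_of_nonneg_left hEe hr0.le) hTpos.le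
      have a3 : 0 ≤ Real.exp t * r * Real.exp 1 * (Real.exp 1 - 2) :=
        mul_nonneg (mul_nonneg (mul_nonneg hTpos.le hr0.le) (Real.exp_pos 1).le)
          (by linarith)
      have a4 : Real.exp t * r * (Real.exp 1 * Real.exp 1) = Real.exp t * r * Real.exp 2 := by
        rw [he2]
      linarith [a1, a2, a3, a4, hlo]
    · obtain ⟨hlo, _⟩ := hbig h1
      have h2r : Real.exp (2 * r) = Real.exp r * Real.exp r := by
        rw [← Real.exp_add]; ring_nf
      have hEe : Real.exp 1 ≤ Real.exp r := Real.exp_le_exp.mpr h1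
      have b1 : Real.exp t * (Real.exp r - 1) ≤ Real.exp t * Real.exp r :=
        mul_le_mul_of_nonneg_left (by linarith) hTpos.le
      have b2 : 0 ≤ Real.exp t * Real.exp r * (Real.exp r - 2) :=
        mul_nonneg (mul_nonneg hTpos.le (Real.exp_pos r).le) (by linarith)
      have b3 : Real.exp t * (Real.exp r * Real.exp r) = Real.exp t * Real.exp (2 * r) := by
        rw [h2r]
      linarith [b1, b2, b3, hlo]
  constructor
  -- First inclusion: ball ⊆ CZ set
  · rintro ⟨x, s⟩ hp
    have hp' : Real.log
        (((Real.exp (s - t) + Real.exp (t - s) +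
          Real.exp (-t - s) * ∑ i, (c i - x i) ^ 2) / 2) +
        Real.sqrt (((Real.exp (s - t) + Real.exp (t - s) +
          Real.exp (-t - s) * ∑ i, (c i - x i) ^ 2) / 2) ^ 2 - 1)) < r := hp
    set D := ∑ i, (c i - x i) ^ 2 with hDdef
    have hD0 : 0 ≤ D := by
      rw [hDdef]; exact Finset.sum_nonneg fun i _ => sq_nonneg _
    clear_value D
    have hYeq : (Real.exp (s - t) + Real.exp (t - s) + Real.exp (-t - s) * D) / 2
        = Real.cosh (s - t) + Real.exp (-t - s) * D / 2 := by
      rw [Real.cosh_eq, show -(s - t) = t - s by ring]; ring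
    set Y := Real.cosh (s - t) + Real.exp (-t - s) * D / 2 with hYdef
    clear_value Y
    rw [hYeq] at hp'
    have hterm0 : 0 ≤ Real.exp (-t - s) * D / 2 := by positivity
    have hY1 : 1 ≤ Y := by
      have := Real.one_le_cosh (s - t); linarith
    have hYcosh : Y < Real.cosh r := my_lt_cosh_of_arcoshR_lt hY1 hp'
    have hcosh_st : Real.cosh (s - t) < Real.cosh r := by linarith
    have habs : |s - t| < r := by
      have h := Real.cosh_lt_cosh.mp hcosh_st
      rwa [abs_of_pos hr0] at h
    obtain ⟨habs1, habs2⟩ := abs_lt.mp habs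
    -- bound on D
    have hcoshr : Real.cosh r = (Real.exp r + Real.exp (-r)) / 2 := Real.cosh_eq r
    have h1 : Real.exp (-t - s) * D < Real.exp r + Real.exp (-r) - 2 := by
      have := Real.one_le_cosh (s - t); linarith
    have hcge : (0:ℝ) ≤ Real.exp r + Real.exp (-r) - 2 := by
      have := Real.one_le_cosh r; linarith
    have hmul1 : Real.exp (-t - s) * Real.exp (t + s) = 1 := by
      rw [← Real.exp_add]; ring_nf; exact Real.exp_zero
    have h2 : D < Real.exp (t + s) * (Real.exp r + Real.exp (-r) - 2) := by
      have h3 := mul_lt_mul_of_pos_left h1 (Real.exp_pos (t + s))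
      calc D = Real.exp (t + s) * (Real.exp (-t - s) * D) := by
            rw [← mul_assoc, mul_comm (Real.exp (t + s)), hmul1, one_mul]
        _ < Real.exp (t + s) * (Real.exp r + Real.exp (-r) - 2) := h3
    have h3 : Real.exp (t + s) ≤ Real.exp (2 * t) * Real.exp r := by
      rw [← Real.exp_add]; exact Real.exp_le_exp.mpr (by linarith)
    have e2 : Real.exp (2 * t) = Real.exp t * Real.exp t := by
      rw [← Real.exp_add]; ring_nf
    have h6 : Real.exp (2 * t) * Real.exp r * (Real.exp r + Real.exp (-r) - 2)
        = (Real.exp t * (Real.exp r - 1)) ^ 2 := by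
      rw [e2]; linear_combination (Real.exp t * Real.exp t) * hEE'
    have h5 : Real.exp (t + s) * (Real.exp r + Real.exp (-r) - 2)
        ≤ Real.exp (2 * t) * Real.exp r * (Real.exp r + Real.exp (-r) - 2) :=
      mul_le_mul_of_nonneg_right h3 hcge
    have hDlt : D < (Real.exp t * (Real.exp r - 1)) ^ 2 := by
      rw [← h6]; linarith
    have hside : (0:ℝ) ≤ Real.exp t * (Real.exp r - 1) :=
      mul_nonneg hTpos.le (by linarith)
    have hDlt2 : D < (L / 2) ^ 2 := by
      calc D < (Real.exp t * (Real.exp r - 1)) ^ 2 := hDlt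
        _ ≤ (L / 2) ^ 2 := pow_le_pow_left₀ hside hhalf 2
    refine Set.mem_prod.mpr ⟨?_, ?_⟩
    · rw [hQ]
      intro i
      have hci : c i = ((m i : ℝ) + 1 / 2) * 2 ^ k := by rw [hc]
      have hsingle : (c i - x i) ^ 2 ≤ D := by
        rw [hDdef]
        exact Finset.single_le_sum (f := fun j => (c j - x j) ^ 2)
          (fun j _ => sq_nonneg _) (Finset.mem_univ i)
      have hsq : (c i - x i) ^ 2 < (L / 2) ^ 2 := lt_of_le_of_lt hsingle hDlt2
      rw [hLk] at hsq hL0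
      constructor
      · nlinarith [hsq, hL0, hci]
      · nlinarith [hsq, hL0, hci]
    · exact ⟨by linarith, by linarith⟩
  -- Second inclusion: CZ set ⊆ ball
  · rintro ⟨x, s⟩ ⟨hxQ, hs1, hs2⟩
    rw [hQ] at hxQ
    set D := ∑ i, (c i - x i) ^ 2 with hDdef
    have hD0 : 0 ≤ D := by
      rw [hDdef]; exact Finset.sum_nonneg fun i _ => sq_nonneg _
    have hDle : D ≤ (n : ℝ) * (L ^ 2 / 4) := by
      rw [hDdef]
      have hb : ∀ i ∈ Finset.univ, (c i - x i) ^ 2 ≤ L ^ 2 / 4 := by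
        intro i _
        have hci : c i = ((m i : ℝ) + 1 / 2) * 2 ^ k := by rw [hc]
        obtain ⟨hx1, hx2⟩ := hxQ i
        rw [hLk]
        have h2k : (0:ℝ) < 2 ^ k := by positivity
        nlinarith [hx1, hx2, hci, h2k]
      calc (∑ i, (c i - x i) ^ 2)
          ≤ (Finset.univ : Finset (Fin n)).card • (L ^ 2 / 4) :=
          Finset.sum_le_card_nsmul _ _ _ hb
        _ = (n : ℝ) * (L ^ 2 / 4) := by
          simp [Finset.card_univ, nsmul_eq_mul]
    show Real.log
        (((Real.exp (s - t) + Real.exp (t - s) +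
          Real.exp (-t - s) * D) / 2) +
        Real.sqrt (((Real.exp (s - t) + Real.exp (t - s) +
          Real.exp (-t - s) * D) / 2) ^ 2 - 1)) < (20 + 2 * n + n * Real.exp 17) * r
    clear_value D
    have hYeq : (Real.exp (s - t) + Real.exp (t - s) + Real.exp (-t - s) * D) / 2
        = Real.cosh (s - t) + Real.exp (-t - s) * D / 2 := by
      rw [Real.cosh_eq, show -(s - t) = t - s by ring]; ring
    rw [hYeq]
    set Y := Real.cosh (s - t) + Real.exp (-t - s) * D / 2 with hYdef
    clear_value Y
    have hterm0 : 0 ≤ Real.exp (-t - s) * D / 2 := by positivity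
    have hY1 : 1 ≤ Y := by
      have := Real.one_le_cosh (s - t); linarith
    have hcosh_st : Real.cosh (s - t) ≤ Real.cosh r := by
      apply Real.cosh_le_cosh.mpr
      rw [abs_of_pos hr0]
      exact abs_le.mpr ⟨by linarith, by linarith⟩
    have hE3 : Real.exp (-t - s) ≤ Real.exp (-(2 * t)) * Real.exp r := by
      rw [← Real.exp_add]; exact Real.exp_le_exp.mpr (by linarith)
    have hterm : Real.exp (-t - s) * D
        ≤ Real.exp (-(2 * t)) * Real.exp r * ((n : ℝ) * (L ^ 2 / 4)) :=
      mul_le_mul hE3 hDle hD0 (by positivity)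
    have hmm : Real.exp (-(2 * t)) * Real.exp (2 * t) = 1 := by
      rw [← Real.exp_add]; ring_nf; exact Real.exp_zero
    have hn0 : (0:ℝ) ≤ n := Nat.cast_nonneg n
    have h17 : (0:ℝ) < Real.exp 17 := Real.exp_pos _
    rcases lt_or_ge r 1 with h1 | h1
    · -- small r
      obtain ⟨_, hhi⟩ := hsmall h1
      have hL2 : Real.exp (-(2 * t)) * L ^ 2 < Real.exp 16 * r ^ 2 := by
        have e8 : Real.exp 8 * Real.exp 8 = Real.exp 16 := by
          rw [← Real.exp_add]; norm_num
        have e2t : Real.exp t * Real.exp t = Real.exp (2 * t) := by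
          rw [← Real.exp_add]; ring_nf
        have hid : (Real.exp 8 * Real.exp t * r) ^ 2
            = Real.exp 16 * Real.exp (2 * t) * r ^ 2 := by
          linear_combination (Real.exp t ^ 2 * r ^ 2) * e8 + (Real.exp 16 * r ^ 2) * e2t
        have hLsq : L ^ 2 < Real.exp 16 * Real.exp (2 * t) * r ^ 2 := by
          rw [← hid]
          have hA : (0:ℝ) < Real.exp 8 * Real.exp t * r := by positivity
          nlinarith [hhi, hL0, hA]
        have h2tpos : (0:ℝ) < Real.exp (-(2 * t)) := Real.exp_pos _
        have h7 := mul_lt_mul_of_pos_left hLsq h2tpos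
        have hid2 : Real.exp (-(2 * t)) * (Real.exp 16 * Real.exp (2 * t) * r ^ 2)
            = Real.exp 16 * r ^ 2 := by
          linear_combination (Real.exp 16 * r ^ 2) * hmm
        linarith
      have hEe : Real.exp r ≤ Real.exp 1 := Real.exp_le_exp.mpr h1.le
      have he17 : Real.exp 1 * Real.exp 16 = Real.exp 17 := by
        rw [← Real.exp_add]; norm_num
      -- cosh r ≤ 1 + 4 r^2
      have hkey : Real.exp r - 1 ≤ r * Real.exp r := my_exp_sub_one_le
      have hsq1 : (Real.exp r - 1) ^ 2 ≤ (r * Real.exp r) ^ 2 := by nlinarith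
      have hsqE' : (Real.exp r - 1) ^ 2 * Real.exp (-r) ≤ (r * Real.exp r) ^ 2 * Real.exp (-r) :=
        mul_le_mul_of_nonneg_right hsq1 hE'pos.le
      have hid1 : (Real.exp r - 1) ^ 2 * Real.exp (-r)
          = Real.exp r + Real.exp (-r) - 2 := by
        linear_combination (Real.exp r - 2) * hEE'
      have hid2 : (r * Real.exp r) ^ 2 * Real.exp (-r) = r ^ 2 * Real.exp r := by
        linear_combination (r ^ 2 * Real.exp r) * hEE'
      have hEe3 : Real.exp r ≤ 3 := by nlinarith
      have hcr : Real.cosh r ≤ 1 + 4 * r ^ 2 := by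
        rw [Real.cosh_eq]
        linarith [hsqE', hid1, hid2, sq_nonneg r, mul_le_mul_of_nonneg_left hEe3 (sq_nonneg r)]
      set K : ℝ := 4 + (n : ℝ) * Real.exp 17 / 8 with hKdef
      clear_value K
      have hK4 : (4:ℝ) ≤ K := by
        rw [hKdef]; linarith [mul_nonneg hn0 h17.le]
      have hYle : Y ≤ 1 + K * r ^ 2 := by
        have hterm2 : Real.exp (-(2 * t)) * Real.exp r * ((n : ℝ) * (L ^ 2 / 4)) / 2
            = Real.exp r * ((n:ℝ) / 8) * (Real.exp (-(2 * t)) * L ^ 2) := by ring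
        have hterm3 : Real.exp r * ((n:ℝ) / 8) * (Real.exp (-(2 * t)) * L ^ 2)
            ≤ Real.exp 1 * ((n:ℝ) / 8) * (Real.exp 16 * r ^ 2) := by
          apply mul_le_mul
          · exact mul_le_mul_of_nonneg_right hEe (by positivity)
          · exact hL2.le
          · positivity
          · positivity
        have : Real.exp 1 * ((n:ℝ) / 8) * (Real.exp 16 * r ^ 2)
            = (n : ℝ) * Real.exp 17 / 8 * r ^ 2 := by
          rw [← he17]; ring
        have hc2 : Real.cosh (s - t) ≤ 1 + 4 * r ^ 2 := le_trans hcosh_st hcr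
        rw [hKdef]
        linarith [hterm, hterm2, hterm3, hc2, this, hYdef]
      have hsqrt : Real.sqrt (Y ^ 2 - 1) ≤ (K + 1) * r := by
        have hY2 : Y ^ 2 - 1 ≤ ((K + 1) * r) ^ 2 := by
          have hYsq : Y ^ 2 ≤ (1 + K * r ^ 2) ^ 2 := by
            have h0Y : (0:ℝ) ≤ Y := by linarith
            exact pow_le_pow_left₀ h0Y hYle 2
          have hr2 : r ^ 2 ≤ 1 := by nlinarith
          linarith [hYsq, mul_nonneg (sq_nonneg (K * r))
            (by linarith : (0:ℝ) ≤ 1 - r ^ 2), sq_nonneg r]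
        calc Real.sqrt (Y ^ 2 - 1) ≤ Real.sqrt (((K + 1) * r) ^ 2) :=
            Real.sqrt_le_sqrt hY2
          _ = (K + 1) * r := Real.sqrt_sq (by positivity)
      have hd := my_arcoshR_le_sub_add hY1
      have : Y - 1 + Real.sqrt (Y ^ 2 - 1) ≤ K * r + (K + 1) * r := by
        have : Y - 1 ≤ K * r := by nlinarith
        linarith
      have hfin : (2 * K + 1) * r < (20 + 2 * (n:ℝ) + (n:ℝ) * Real.exp 17) * r := by
        have h8 : 2 * K + 1 < 20 + 2 * (n:ℝ) + (n:ℝ) * Real.exp 17 := by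
          rw [hKdef]; linarith [mul_nonneg hn0 h17.le]
        exact mul_lt_mul_of_pos_right h8 hr0
      calc Real.log (Y + Real.sqrt (Y ^ 2 - 1)) ≤ Y - 1 + Real.sqrt (Y ^ 2 - 1) := hd
        _ ≤ K * r + (K + 1) * r := this
        _ = (2 * K + 1) * r := by ring
        _ < _ := hfin
    · -- large r
      obtain ⟨_, hhi⟩ := hbig h1
      have hL2 : Real.exp (-(2 * t)) * L ^ 2 < Real.exp (16 * r) := by
        have e8 : Real.exp (8 * r) * Real.exp (8 * r) = Real.exp (16 * r) := by
          rw [← Real.exp_add]; ring_nf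
        have e2t : Real.exp t * Real.exp t = Real.exp (2 * t) := by
          rw [← Real.exp_add]; ring_nf
        have hid : (Real.exp t * Real.exp (8 * r)) ^ 2
            = Real.exp (2 * t) * Real.exp (16 * r) := by
          linear_combination (Real.exp t ^ 2) * e8 + (Real.exp (16 * r)) * e2t
        have hLsq : L ^ 2 < Real.exp (2 * t) * Real.exp (16 * r) := by
          rw [← hid]
          have hA : (0:ℝ) < Real.exp t * Real.exp (8 * r) := by positivity
          nlinarith [hhi, hL0, hA]
        have h2tpos : (0:ℝ) < Real.exp (-(2 * t)) := Real.exp_pos _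
        have h7 := mul_lt_mul_of_pos_left hLsq h2tpos
        have hid2 : Real.exp (-(2 * t)) * (Real.exp (2 * t) * Real.exp (16 * r))
            = Real.exp (16 * r) := by
          linear_combination (Real.exp (16 * r)) * hmm
        linarith
      have he17r : Real.exp r * Real.exp (16 * r) = Real.exp (17 * r) := by
        rw [← Real.exp_add]; ring_nf
      have hcoshE : Real.cosh r ≤ Real.exp r := by
        rw [Real.cosh_eq]
        nlinarith [Real.exp_le_exp.mpr (show -r ≤ r by linarith)]
      have hErr : Real.exp r ≤ Real.exp (17 * r) := Real.exp_le_exp.mpr (by nlinarith)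
      have hYle : Y ≤ (1 + (n:ℝ)) * Real.exp (17 * r) := by
        have hterm2 : Real.exp (-(2 * t)) * Real.exp r * ((n : ℝ) * (L ^ 2 / 4)) / 2
            = Real.exp r * ((n:ℝ) / 8) * (Real.exp (-(2 * t)) * L ^ 2) := by ring
        have hterm3 : Real.exp r * ((n:ℝ) / 8) * (Real.exp (-(2 * t)) * L ^ 2)
            ≤ Real.exp r * ((n:ℝ) / 8) * Real.exp (16 * r) := by
          apply mul_le_mul_of_nonneg_left hL2.le (by positivity)
        have hterm4 : Real.exp r * ((n:ℝ) / 8) * Real.exp (16 * r)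
            = (n:ℝ) / 8 * Real.exp (17 * r) := by rw [← he17r]; ring
        have h17rpos : (0:ℝ) < Real.exp (17 * r) := Real.exp_pos _
        linarith [hterm, hterm2, hterm3, hterm4, hcosh_st, hcoshE, hErr,
          mul_nonneg hn0 h17rpos.le]
      have hd := my_arcoshR_le_log_two_mul hY1
      have hlog2 : Real.log (2 * Y) ≤ Real.log (2 * (1 + (n:ℝ)) * Real.exp (17 * r)) := by
        apply Real.log_le_log (by linarith)
        linarith [hYle]
      have hlog3 : Real.log (2 * (1 + (n:ℝ)) * Real.exp (17 * r))
          = Real.log (2 * (1 + (n:ℝ))) + 17 * r := by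
        rw [Real.log_mul (by positivity) (Real.exp_ne_zero _), Real.log_exp]
      have hlog4 : Real.log (2 * (1 + (n:ℝ))) ≤ 1 + 2 * (n:ℝ) := by
        have := Real.log_le_sub_one_of_pos (show (0:ℝ) < 2 * (1 + (n:ℝ)) by positivity)
        linarith
      have hfin : Real.log (Y + Real.sqrt (Y ^ 2 - 1)) ≤ 1 + 2 * (n:ℝ) + 17 * r := by
        linarith
      have : 1 + 2 * (n:ℝ) + 17 * r < (20 + 2 * (n:ℝ) + (n:ℝ) * Real.exp 17) * r := by
        linarith [mul_nonneg hn0 (by linarith : (0:ℝ) ≤ r - 1),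
          mul_nonneg (mul_nonneg hn0 h17.le) hr0.le]
      linarith
end

section
/- There exists a constant κ₀ ∈ [1, ∞), depending only on n, such that for every Calderón–Zygmund set R ∈ ℛ one has ρ(R*) ≤ κ₀ ρ(R), where R* = {x ∈ S : d(x, R) < r_R} is the dilated set of R and d(x, R) = inf_{y ∈ R} d(x, y). -/
open MeasureTheory Set Filter
open scoped ENNReal NNReal Topology

/-!
Since `cosh d((x,t),(x',t')) = cosh (t - t') + e^{-t-t'} |x - x'|² / 2`, a point at distance
less than `r` from `R = Q × [t - r, t + r)` differs from a point of `R` by less than `r` in the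
last coordinate, and by at most `(2 (cosh r - 1) e^{2t+3r})^{1/2}` in each coordinate of `ℝⁿ`.
The lower bounds on `L` in the definition of `ℛ` are exactly what makes the latter at most
`2L`. So `R*` lies in a box of sides `5L` (in `ℝⁿ`) and `4r`, whence `ρ(R*) ≤ 2 · 5ⁿ ρ(R)`.
-/

open Real Metric

-- `arcoshR` is `Real.arcosh` by definition.
lemma lt_cosh_of_arcoshR_lt {u r : ℝ} (hu : 1 ≤ u) (h : arcoshR u < r) : u < cosh r := by
  have hnonneg : 0 ≤ arcosh u := arcosh_nonneg hu
  rw [← cosh_arcosh hu, cosh_lt_cosh, abs_of_nonneg hnonneg, abs_of_pos (hnonneg.trans_lt h)]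
  exact h

lemma hypDist_eq_arcoshR_cosh_add (n : ℕ) (p q : Sp n) :
    hypDist n p q =
      arcoshR (cosh (p.2 - q.2) + exp (-p.2 - q.2) * (∑ i, (p.1 i - q.1 i) ^ 2) / 2) := by
  rw [hypDist, cosh_eq, neg_sub]
  ring_nf

lemma hypDist_nonneg (n : ℕ) (p q : Sp n) : 0 ≤ hypDist n p q := by
  rw [hypDist_eq_arcoshR_cosh_add]
  exact arcosh_nonneg (le_add_of_le_of_nonneg (one_le_cosh _) (by positivity))

section

variable {n : ℕ} {p q : Sp n} {r : ℝ}

lemma cosh_add_lt_cosh_of_hypDist_lt (h : hypDist n p q < r) :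
    cosh (p.2 - q.2) + exp (-p.2 - q.2) * (∑ i, (p.1 i - q.1 i) ^ 2) / 2 < cosh r := by
  rw [hypDist_eq_arcoshR_cosh_add] at h
  exact lt_cosh_of_arcoshR_lt (le_add_of_le_of_nonneg (one_le_cosh _) (by positivity)) h

lemma abs_sub_snd_lt_of_hypDist_lt (h : hypDist n p q < r) :
    |p.2 - q.2| < r := by
  have hlt := cosh_add_lt_cosh_of_hypDist_lt h
  have hS : 0 ≤ exp (-p.2 - q.2) * (∑ i, (p.1 i - q.1 i) ^ 2) / 2 := by positivity
  have hr : 0 < r := (hypDist_nonneg n p q).trans_lt h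
  simpa [abs_of_pos hr] using cosh_lt_cosh.mp (by linarith : cosh (p.2 - q.2) < cosh r)

lemma sum_sq_sub_fst_le_of_hypDist_lt (h : hypDist n p q < r) :
    ∑ i, (p.1 i - q.1 i) ^ 2 ≤ 2 * (cosh r - 1) * exp (p.2 + q.2) := by
  have hlt := cosh_add_lt_cosh_of_hypDist_lt h
  have hone := one_le_cosh (p.2 - q.2)
  have hexp : exp (-p.2 - q.2) * exp (p.2 + q.2) = 1 := by
    rw [← exp_add, show -p.2 - q.2 + (p.2 + q.2) = 0 by ring, exp_zero]
  calc ∑ i, (p.1 i - q.1 i) ^ 2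
      = exp (-p.2 - q.2) * (∑ i, (p.1 i - q.1 i) ^ 2) * exp (p.2 + q.2) := by
        rw [mul_comm (exp _), mul_assoc, hexp, mul_one]
    _ ≤ 2 * (cosh r - 1) * exp (p.2 + q.2) :=
        mul_le_mul_of_nonneg_right (by linarith) (exp_pos _).le

end

lemma cosh_sub_one_le_sq {r : ℝ} (hr : |r| ≤ 1) : cosh r - 1 ≤ r ^ 2 := by
  have h₁ := abs_le.mp (abs_exp_sub_one_sub_id_le hr)
  have h₂ := abs_le.mp (abs_exp_sub_one_sub_id_le (x := -r) (by rwa [abs_neg]))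
  rw [cosh_eq]
  nlinarith [h₁.2, h₂.2]

lemma cosh_sub_one_le_exp {r : ℝ} (hr : 0 ≤ r) : cosh r - 1 ≤ exp r := by
  have : exp (-r) ≤ exp r := exp_le_exp.mpr (by linarith)
  rw [cosh_eq]
  linarith

lemma CZParam.two_mul_cosh_sub_one_mul_exp_le {n : ℕ} {Q : Set (Fin n → ℝ)} {L : ℝ}
    {c : Fin n → ℝ} {t r : ℝ} (h : CZParam n Q L c t r) :
    2 * (cosh r - 1) * exp (2 * t + 3 * r) ≤ (2 * L) ^ 2 := by
  obtain ⟨-, hr, hsmall, hlarge⟩ := h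
  rcases lt_or_ge r 1 with hr1 | hr1
  · have hL := (hsmall hr1).1
    calc 2 * (cosh r - 1) * exp (2 * t + 3 * r) ≤ 2 * r ^ 2 * exp (2 * t + 4) := by
          gcongr
          · exact cosh_sub_one_le_sq (by rw [abs_of_pos hr]; exact hr1.le)
          · linarith
      _ ≤ (2 * (exp 2 * exp t * r)) ^ 2 := by
          have : (2 * (exp 2 * exp t * r)) ^ 2 = 4 * r ^ 2 * exp (2 * t + 4) := by
            rw [show 2 * t + 4 = t + t + (2 + 2) by ring, exp_add, exp_add, exp_add]; ring
          rw [this]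
          gcongr
          norm_num
      _ ≤ (2 * L) ^ 2 := by gcongr
  · have hL := (hlarge hr1).1
    calc 2 * (cosh r - 1) * exp (2 * t + 3 * r) ≤ 2 * exp r * exp (2 * t + 3 * r) := by
          gcongr
          exact cosh_sub_one_le_exp hr.le
      _ ≤ (2 * (exp t * exp (2 * r))) ^ 2 := by
          have : (2 * (exp t * exp (2 * r))) ^ 2 = 4 * exp (2 * t + 4 * r) := by
            rw [show 2 * t + 4 * r = t + t + (2 * r + 2 * r) by ring, exp_add, exp_add, exp_add]
            ring
          rw [this, mul_assoc, ← exp_add, show r + (2 * t + 3 * r) = 2 * t + 4 * r by ring]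
          gcongr
          norm_num
      _ ≤ (2 * L) ^ 2 := by gcongr

lemma dist_le_of_sum_sq_sub_le {ι : Type*} [Fintype ι] {x y : ι → ℝ} {D : ℝ} (hD : 0 ≤ D)
    (h : ∑ i, (x i - y i) ^ 2 ≤ D ^ 2) : dist x y ≤ D := by
  refine (dist_pi_le_iff hD).mpr fun i => ?_
  rw [Real.dist_eq]
  refine abs_le_of_sq_le_sq (le_trans ?_ h) hD
  exact Finset.single_le_sum (f := fun j => (x j - y j) ^ 2) (fun j _ => sq_nonneg _)
    (Finset.mem_univ i)

namespace IsDyadicCube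

variable {n : ℕ} {Q : Set (Fin n → ℝ)} {L : ℝ} {c : Fin n → ℝ}

lemma side_pos (h : IsDyadicCube n Q L c) : 0 < L := by
  obtain ⟨k, -, rfl, -⟩ := h
  positivity

lemma eq_pi (h : IsDyadicCube n Q L c) :
    Q = univ.pi fun i => Ico (c i - L / 2) (c i + L / 2) := by
  obtain ⟨k, m, rfl, rfl, rfl⟩ := h
  ext x
  simp only [Set.mem_ofPred_eq, Set.mem_pi, Set.mem_univ, true_implies, Set.mem_Ico]
  refine forall_congr' fun i => ?_
  constructor <;> rintro ⟨h₁, h₂⟩ <;> constructor <;> linarith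

lemma volume_eq (h : IsDyadicCube n Q L c) : volume Q = ENNReal.ofReal (L ^ n) := by
  rw [h.eq_pi, volume_pi_pi]
  simp_rw [Real.volume_Ico, add_sub_sub_cancel, add_halves]
  rw [Finset.prod_const, Finset.card_univ, Fintype.card_fin, ENNReal.ofReal_pow h.side_pos.le]

lemma subset_closedBall (h : IsDyadicCube n Q L c) : Q ⊆ closedBall c (L / 2) := by
  intro y hy
  rw [h.eq_pi] at hy
  refine (dist_pi_le_iff (by linarith [h.side_pos])).mpr fun i => ?_
  obtain ⟨h₁, h₂⟩ := hy i (mem_univ i)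
  rw [Real.dist_eq, abs_le]
  constructor <;> linarith

end IsDyadicCube

lemma volume_czSet {n : ℕ} {Q : Set (Fin n → ℝ)} {L : ℝ} {c : Fin n → ℝ}
    (hQ : IsDyadicCube n Q L c) (t r : ℝ) :
    volume (czSet n Q t r) = ENNReal.ofReal (L ^ n * (2 * r)) := by
  rw [czSet, Measure.volume_eq_prod, Measure.prod_prod, hQ.volume_eq, Real.volume_Ico,
    ← ENNReal.ofReal_mul (pow_nonneg hQ.side_pos.le n)]
  ring_nf

lemma volume_closedBall_prod_closedBall {ι : Type*} [Fintype ι] (c : ι → ℝ) (t : ℝ) {a b : ℝ}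
    (ha : 0 ≤ a) :
    volume (closedBall c a ×ˢ closedBall t b) =
      ENNReal.ofReal ((2 * a) ^ Fintype.card ι * (2 * b)) := by
  rw [Measure.volume_eq_prod, Measure.prod_prod, Real.volume_pi_closedBall c ha,
    Real.volume_closedBall, ← ENNReal.ofReal_mul (by positivity)]

/-- The open `r`-neighbourhood of `R` for the hyperbolic metric. -/
def hypThickening (n : ℕ) (R : Set (Sp n)) (r : ℝ) : Set (Sp n) :=
  {x | ∃ y ∈ R, hypDist n x y < r}

lemma hypThickening_czSet_subset {n : ℕ} {Q : Set (Fin n → ℝ)} {L : ℝ} {c : Fin n → ℝ}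
    {t r : ℝ} (h : CZParam n Q L c t r) :
    hypThickening n (czSet n Q t r) r ⊆ closedBall c (5 * L / 2) ×ˢ closedBall t (2 * r) := by
  rintro x ⟨y, ⟨hyQ, hyt⟩, hxy⟩
  have hL := h.1.side_pos
  obtain ⟨htime₁, htime₂⟩ := abs_lt.mp (abs_sub_snd_lt_of_hypDist_lt hxy)
  rw [mem_Ico] at hyt
  have hspace : dist x.1 y.1 ≤ 2 * L := by
    refine dist_le_of_sum_sq_sub_le (by positivity) ?_
    calc ∑ i, (x.1 i - y.1 i) ^ 2 ≤ 2 * (cosh r - 1) * exp (x.2 + y.2) :=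
          sum_sq_sub_fst_le_of_hypDist_lt hxy
      _ ≤ 2 * (cosh r - 1) * exp (2 * t + 3 * r) := by
          have := one_le_cosh r
          gcongr 2 * (cosh r - 1) * exp ?_
          linarith
      _ ≤ (2 * L) ^ 2 := h.two_mul_cosh_sub_one_mul_exp_le
  refine ⟨?_, ?_⟩
  · calc dist x.1 c ≤ dist x.1 y.1 + dist y.1 c := dist_triangle _ _ _
      _ ≤ 2 * L + L / 2 := add_le_add hspace (h.1.subset_closedBall hyQ)
      _ = 5 * L / 2 := by ring
  · rw [mem_closedBall, Real.dist_eq, abs_le]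
    constructor <;> linarith

theorem exists_kappa_volume_dilated_le_general (n : ℕ) :
    ∃ κ₀ : ℝ, 1 ≤ κ₀ ∧ ∀ (Q : Set (Fin n → ℝ)) (L : ℝ) (c : Fin n → ℝ) (t r : ℝ),
      CZParam n Q L c t r →
        volume {x : Sp n | ∃ y ∈ czSet n Q t r, hypDist n x y < r}
          ≤ ENNReal.ofReal κ₀ * volume (czSet n Q t r) := by
  refine ⟨2 * 5 ^ n, by linarith [one_le_pow₀ (M₀ := ℝ) (n := n) (by norm_num : (1 : ℝ) ≤ 5)],
    fun Q L c t r h => ?_⟩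
  have hL := h.1.side_pos
  calc volume (hypThickening n (czSet n Q t r) r)
      ≤ volume (closedBall c (5 * L / 2) ×ˢ closedBall t (2 * r)) :=
        measure_mono (hypThickening_czSet_subset h)
    _ = ENNReal.ofReal ((5 * L) ^ n * (4 * r)) := by
        rw [volume_closedBall_prod_closedBall c t (by positivity), Fintype.card_fin]
        ring_nf
    _ = ENNReal.ofReal (2 * 5 ^ n) * volume (czSet n Q t r) := by
        rw [volume_czSet h.1, ← ENNReal.ofReal_mul (by positivity)]
        ring_nf

/-- There exists `κ₀ ∈ [1, ∞)`, depending only on `n`, such that for every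
Calderón–Zygmund set `R ∈ ℛ` one has `ρ(R*) ≤ κ₀ ρ(R)`, where
`R* = {x ∈ S : d(x, R) < r_R}` is the dilated set of `R`. -/
theorem exists_kappa_volume_dilated_le (n : ℕ) (hn : 1 ≤ n) :
    ∃ κ₀ : ℝ, 1 ≤ κ₀ ∧ ∀ (Q : Set (Fin n → ℝ)) (L : ℝ) (c : Fin n → ℝ) (t r : ℝ),
      CZParam n Q L c t r →
        volume {x : Sp n | ∃ y ∈ czSet n Q t r, hypDist n x y < r}
          ≤ ENNReal.ofReal κ₀ * volume (czSet n Q t r) :=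
  exists_kappa_volume_dilated_le_general n
end

section
/- Every Calderón–Zygmund set R ∈ ℛ can be decomposed into k mutually disjoint sets R₁, …, R_k ∈ ℛ, with k = 2 or k = 2ⁿ, such that R = ∪_{i=1}^k Rᵢ and ρ(Rᵢ) = ρ(R)/k for all i ∈ {1, …, k}. -/
open MeasureTheory Set Filter
open scoped ENNReal NNReal Topology

section CZAux

open Real

/-- Admissibility of `(L, t, r)` for a Calderón-Zygmund set. -/
def CZAdm (L t r : ℝ) : Prop :=
  0 < r ∧ (r < 1 → exp 2 * exp t * r ≤ L ∧ L < exp 8 * exp t * r) ∧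
    (1 ≤ r → exp t * exp (2 * r) ≤ L ∧ L < exp t * exp (8 * r))

lemma exp_half_le_two {x : ℝ} (hx : x ≤ 1/2) : exp x ≤ 2 := by
  have h1 : exp x ≤ exp (1/2) := exp_le_exp.2 hx
  have h2 : exp (1/2) * exp (1/2) = exp 1 := by rw [← exp_add]; norm_num
  have h3 : exp 1 < 2.7182818286 := exp_one_lt_d9
  have h4 : 0 < exp (1/2) := exp_pos _
  nlinarith

lemma czAdm_time {L t r : ℝ} (h : CZAdm L t r)
    (hc : (r < 1 ∧ L < 2 * (exp 2 * exp t * r)) ∨ (1 ≤ r ∧ L < 2 * (exp t * exp (2 * r))))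
    (s : ℝ) (hs : -1 ≤ s) (hs' : s ≤ 1) : CZAdm L (t + s * (r / 2)) (r / 2) := by
  obtain ⟨hr, hA1, hA2⟩ := h
  have hrp : 0 < r / 2 := by linarith
  have het : 0 < exp t := exp_pos t
  have hsr : s * (r / 2) ≤ r / 2 := by nlinarith
  have hsr' : -(r / 2) ≤ s * (r / 2) := by nlinarith
  have hexp_t' : exp (t + s * (r / 2)) = exp t * exp (s * (r / 2)) := exp_add _ _
  have hes : 0 < exp (s * (r / 2)) := exp_pos _
  rcases hc with ⟨hr1, hC⟩ | ⟨hr1, hC⟩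
  · -- r < 1
    obtain ⟨hl, hu⟩ := hA1 hr1
    refine ⟨hrp, fun _ => ⟨?_, ?_⟩, fun h1 => absurd h1 (by linarith)⟩
    · -- lower bound
      have h2 : exp (s * (r / 2)) ≤ 2 := exp_half_le_two (by linarith)
      calc exp 2 * exp (t + s * (r / 2)) * (r / 2)
          = exp 2 * exp t * exp (s * (r / 2)) * (r / 2) := by rw [hexp_t']; ring
        _ ≤ exp 2 * exp t * 2 * (r / 2) := by
            have := exp_pos (2:ℝ); nlinarith [exp_pos (2:ℝ)]
        _ = exp 2 * exp t * r := by ring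
        _ ≤ L := hl
    · -- upper bound
      have h4 : (4:ℝ) ≤ exp (6 + s * (r / 2)) := by
        have := add_one_le_exp (6 + s * (r / 2)); linarith
      have h5 : exp 8 * exp (s * (r / 2)) = exp 2 * exp (6 + s * (r / 2)) := by
        rw [← exp_add, ← exp_add]; ring_nf
      calc L < 2 * (exp 2 * exp t * r) := hC
        _ ≤ exp 2 * exp (6 + s * (r / 2)) * exp t * (r / 2) := by
            nlinarith [exp_pos (2:ℝ)]
        _ = exp 8 * exp (t + s * (r / 2)) * (r / 2) := by rw [hexp_t', ← h5]; ring
  · -- 1 ≤ r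
    obtain ⟨hl, hu⟩ := hA2 hr1
    rcases lt_or_ge r 2 with hr2 | hr2
    · -- 1 ≤ r < 2 : r/2 < 1
      refine ⟨hrp, fun _ => ⟨?_, ?_⟩, fun h1 => absurd h1 (by linarith)⟩
      · -- lower
        have hlog : log (r / 2) ≤ r / 2 - 1 := log_le_sub_one_of_pos hrp
        have hkey : exp 2 * exp (s * (r / 2)) * (r / 2) = exp (2 + s * (r / 2) + log (r / 2)) := by
          rw [exp_add, exp_add, exp_log hrp]
        have hle : exp (2 + s * (r / 2) + log (r / 2)) ≤ exp (2 * r) :=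
          exp_le_exp.2 (by linarith)
        calc exp 2 * exp (t + s * (r / 2)) * (r / 2)
            = exp t * (exp 2 * exp (s * (r / 2)) * (r / 2)) := by rw [hexp_t']; ring
          _ ≤ exp t * exp (2 * r) := by rw [hkey]; nlinarith
          _ ≤ L := hl
      · -- upper
        have hA : exp (2 * r) ≤ exp 4 := exp_le_exp.2 (by linarith)
        have hB : exp (-1 : ℝ) ≤ exp (s * (r / 2)) := exp_le_exp.2 (by linarith)
        have h7 : exp 8 * exp (-1 : ℝ) = exp 7 := by rw [← exp_add]; norm_num
        have h74 : exp 7 = exp 4 * exp 3 := by rw [← exp_add]; norm_num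
        have h34 : (4:ℝ) ≤ exp 3 := by have := add_one_le_exp (3:ℝ); linarith
        have hhalf : (1:ℝ)/2 ≤ r / 2 := by linarith
        have key : 2 * exp (2 * r) ≤ exp 8 * exp (s * (r / 2)) * (r / 2) := by
          have h8 : 0 < exp (8:ℝ) := exp_pos _
          have h4p : 0 < exp (4:ℝ) := exp_pos _
          have k1 : exp 8 * exp (-1 : ℝ) * (1/2) ≤ exp 8 * exp (s * (r / 2)) * (r / 2) := by
            apply mul_le_mul (mul_le_mul_of_nonneg_left hB h8.le) hhalf (by norm_num)
              (by positivity)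
          have k2 : 2 * exp (2 * r) ≤ exp 8 * exp (-1 : ℝ) * (1/2) := by
            rw [h7, h74]; nlinarith
          linarith
        calc L < 2 * (exp t * exp (2 * r)) := hC
          _ = exp t * (2 * exp (2 * r)) := by ring
          _ ≤ exp t * (exp 8 * exp (s * (r / 2)) * (r / 2)) := by nlinarith
          _ = exp 8 * exp (t + s * (r / 2)) * (r / 2) := by rw [hexp_t']; ring
    · -- 2 ≤ r : r/2 ≥ 1
      refine ⟨hrp, fun h1 => absurd h1 (by linarith), fun _ => ⟨?_, ?_⟩⟩
      · -- lower
        have : exp (t + s * (r / 2)) * exp (2 * (r / 2)) = exp (t + s * (r / 2) + 2 * (r / 2)) := by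
          rw [← exp_add]
        rw [this]
        calc exp (t + s * (r / 2) + 2 * (r / 2)) ≤ exp (t + 2 * r) :=
              exp_le_exp.2 (by linarith)
          _ = exp t * exp (2 * r) := exp_add _ _
          _ ≤ L := hl
      · -- upper
        have h2 : (2:ℝ) ≤ exp (s * (r / 2) + 2 * r) := by
          have := add_one_le_exp (s * (r / 2) + 2 * r); linarith
        have hkey : exp (t + s * (r / 2)) * exp (8 * (r / 2)) =
            exp t * exp (2 * r) * exp (s * (r / 2) + 2 * r) := by
          rw [← exp_add, ← exp_add, ← exp_add]; ring_nf
        calc L < 2 * (exp t * exp (2 * r)) := hC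
          _ ≤ exp t * exp (2 * r) * exp (s * (r / 2) + 2 * r) := by
              nlinarith [mul_pos het (exp_pos (2*r))]
          _ = exp (t + s * (r / 2)) * exp (8 * (r / 2)) := hkey.symm

lemma czAdm_space {L t r : ℝ} (h : CZAdm L t r)
    (hc : (r < 1 → 2 * (exp 2 * exp t * r) ≤ L) ∧ (1 ≤ r → 2 * (exp t * exp (2 * r)) ≤ L)) :
    CZAdm (L / 2) t r := by
  obtain ⟨hr, hA1, hA2⟩ := h
  refine ⟨hr, fun h1 => ?_, fun h1 => ?_⟩
  · obtain ⟨hl, hu⟩ := hA1 h1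
    have := hc.1 h1
    have hL : 0 < L := lt_of_lt_of_le (by positivity) this
    exact ⟨by linarith, by linarith⟩
  · obtain ⟨hl, hu⟩ := hA2 h1
    have := hc.2 h1
    have hL : 0 < L := lt_of_lt_of_le (by positivity) this
    exact ⟨by linarith, by linarith⟩

def cubeSet (n : ℕ) (k : ℤ) (m : Fin n → ℤ) : Set (Fin n → ℝ) :=
  {x | ∀ i, (m i : ℝ) * 2 ^ k ≤ x i ∧ x i < ((m i : ℝ) + 1) * 2 ^ k}

def subCubeIdx (n : ℕ) (m : Fin n → ℤ) (ε : Fin n → Fin 2) : Fin n → ℤ :=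
  fun i => 2 * m i + (ε i : ℤ)

lemma two_zpow_succ (k : ℤ) : (2:ℝ) ^ k = 2 * 2 ^ (k - 1) := by
  have h := zpow_add_one₀ (two_ne_zero (α := ℝ)) (k - 1)
  rw [sub_add_cancel] at h
  rw [h]; ring

lemma two_zpow_pos (k : ℤ) : (0:ℝ) < 2 ^ k := zpow_pos (by norm_num) k

lemma cubeSet_union (n : ℕ) (k : ℤ) (m : Fin n → ℤ) :
    cubeSet n k m = ⋃ ε : Fin n → Fin 2, cubeSet n (k - 1) (subCubeIdx n m ε) := by
  have hp := two_zpow_pos (k - 1)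
  have h2 := two_zpow_succ k
  ext x
  simp only [Set.mem_iUnion, cubeSet, Set.mem_setOf_eq, subCubeIdx]
  constructor
  · intro hx
    refine ⟨fun i => if x i < (2 * (m i : ℝ) + 1) * 2 ^ (k - 1) then 0 else 1, fun i => ?_⟩
    obtain ⟨h1, h1'⟩ := hx i
    rw [h2] at h1 h1'
    by_cases hc : x i < (2 * (m i : ℝ) + 1) * 2 ^ (k - 1)
    · simp only [hc, if_pos]
      push_cast [Fin.val_zero]
      constructor <;> linarith
    · simp only [hc, if_neg, not_false_iff]
      push_cast [Fin.val_one]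
      constructor <;> linarith [not_lt.1 hc]
  · rintro ⟨ε, hε⟩ i
    obtain ⟨h1, h1'⟩ := hε i
    rw [h2]
    have hεi : (0:ℝ) ≤ ((ε i : ℕ) : ℝ) ∧ ((ε i : ℕ) : ℝ) ≤ 1 := by
      constructor
      · positivity
      · exact_mod_cast Nat.lt_succ_iff.mp (ε i).isLt
    push_cast at h1 h1'
    constructor
    · nlinarith [mul_nonneg hεi.1 hp.le]
    · nlinarith [mul_nonneg (by linarith [hεi.2] : (0:ℝ) ≤ 1 - ((ε i : ℕ) : ℝ)) hp.le]

lemma cubeSet_disjoint (n : ℕ) (k : ℤ) (m : Fin n → ℤ) {ε ε' : Fin n → Fin 2} (h : ε ≠ ε') :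
    Disjoint (cubeSet n (k - 1) (subCubeIdx n m ε)) (cubeSet n (k - 1) (subCubeIdx n m ε')) := by
  rw [Set.disjoint_left]
  intro x hx hx'
  obtain ⟨i, hi⟩ := Function.ne_iff.mp h
  obtain ⟨h1, h2⟩ := hx i
  obtain ⟨h1', h2'⟩ := hx' i
  have hp := two_zpow_pos (k - 1)
  simp only [subCubeIdx] at h1 h2 h1' h2'
  push_cast at h1 h2 h1' h2'
  have hne : ((ε i : ℕ) : ℤ) ≠ ((ε' i : ℕ) : ℤ) := by
    exact_mod_cast fun hc => hi (Fin.ext (by exact_mod_cast hc))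
  rcases lt_or_gt_of_ne hne with hlt | hlt
  · have key : ((ε i : ℕ) : ℝ) + 1 ≤ ((ε' i : ℕ) : ℝ) := by
      exact_mod_cast Int.lt_iff_add_one_le.mp hlt
    have := mul_le_mul_of_nonneg_right
      (show 2 * ((m i : ℤ) : ℝ) + ((ε i : ℕ) : ℝ) + 1 ≤ 2 * ((m i : ℤ) : ℝ) + ((ε' i : ℕ) : ℝ) by
        linarith) hp.le
    linarith
  · have key : ((ε' i : ℕ) : ℝ) + 1 ≤ ((ε i : ℕ) : ℝ) := by
      exact_mod_cast Int.lt_iff_add_one_le.mp hlt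
    have := mul_le_mul_of_nonneg_right
      (show 2 * ((m i : ℤ) : ℝ) + ((ε' i : ℕ) : ℝ) + 1 ≤ 2 * ((m i : ℤ) : ℝ) + ((ε i : ℕ) : ℝ) by
        linarith) hp.le
    linarith

lemma cubeSet_volume (n : ℕ) (k : ℤ) (m : Fin n → ℤ) :
    volume (cubeSet n k m) = ENNReal.ofReal ((2:ℝ) ^ k) ^ n := by
  have : cubeSet n k m
      = Set.pi Set.univ (fun i => Set.Ico ((m i : ℝ) * 2 ^ k) (((m i : ℝ) + 1) * 2 ^ k)) := by
    ext x; simp [cubeSet, Set.mem_pi, Set.mem_Ico]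
  rw [this, volume_pi, Measure.pi_pi]
  simp only [Real.volume_Ico]
  rw [Finset.prod_congr rfl
      (fun i _ => by rw [show ((m i : ℝ) + 1) * 2 ^ k - (m i : ℝ) * 2 ^ k = (2:ℝ) ^ k by ring]),
    Finset.prod_const, Finset.card_univ, Fintype.card_fin]

lemma czSet_volume (n : ℕ) (Q : Set (Fin n → ℝ)) (t r : ℝ) :
    volume (czSet n Q t r) = volume Q * ENNReal.ofReal (2 * r) := by
  rw [czSet, Measure.volume_eq_prod, Measure.prod_prod, Real.volume_Ico,
    show t + r - (t - r) = 2 * r by ring]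

end CZAux

/-- Every Calderón–Zygmund set `R ∈ ℛ` can be decomposed into `k` mutually
disjoint sets `R₁, …, R_k ∈ ℛ`, with `k = 2` or `k = 2ⁿ`, such that `R = ⋃ i, Rᵢ` and
`ρ(Rᵢ) = ρ(R)/k` for all `i`. -/
theorem czSet_decomposition (n : ℕ) (hn : 1 ≤ n) (R : Set (Sp n)) (hR : IsCZSet n R) :
    ∃ k : ℕ, (k = 2 ∨ k = 2 ^ n) ∧ ∃ Rs : Fin k → Set (Sp n),
      (∀ i, IsCZSet n (Rs i)) ∧ Pairwise (Function.onFun Disjoint Rs) ∧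
      R = ⋃ i, Rs i ∧ ∀ i, volume (Rs i) = volume R / k := by
  obtain ⟨Q, L, c, t, r, ⟨⟨kk, m, hLk, hQ, hcc⟩, hr, hA1, hA2⟩, rfl⟩ := hR
  have hAdm : CZAdm L t r := ⟨hr, hA1, hA2⟩
  by_cases hsp : (r < 1 → 2 * (Real.exp 2 * Real.exp t * r) ≤ L) ∧
      (1 ≤ r → 2 * (Real.exp t * Real.exp (2 * r)) ≤ L)
  · -- space split into 2^n pieces
    refine ⟨2 ^ n, Or.inr rfl, ?_⟩
    have hAdm' : CZAdm (L / 2) t r := czAdm_space hAdm hsp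
    have hL2 : (2:ℝ) ^ (kk - 1) = L / 2 := by rw [hLk, two_zpow_succ kk]; ring
    set e := (finFunctionFinEquiv : (Fin n → Fin 2) ≃ Fin (2 ^ n)) with he
    refine ⟨fun j => czSet n (cubeSet n (kk - 1) (subCubeIdx n m (e.symm j))) t r,
      ?_, ?_, ?_, ?_⟩
    · intro j
      refine ⟨cubeSet n (kk - 1) (subCubeIdx n m (e.symm j)), (2:ℝ) ^ (kk - 1),
        fun i => ((subCubeIdx n m (e.symm j) i : ℝ) + 1 / 2) * 2 ^ (kk - 1), t, r,
        ⟨⟨kk - 1, subCubeIdx n m (e.symm j), rfl, rfl, rfl⟩, hAdm'.1, ?_, ?_⟩, rfl⟩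
      · rw [hL2]; exact hAdm'.2.1
      · rw [hL2]; exact hAdm'.2.2
    · intro i j hij
      refine Disjoint.set_prod_left (cubeSet_disjoint n kk m (fun hc => hij ?_)) _ _
      rw [← Equiv.apply_symm_apply e i, hc, Equiv.apply_symm_apply]
    · rw [czSet, hQ]
      show cubeSet n kk m ×ˢ _ = _
      rw [cubeSet_union n kk m, Set.iUnion_prod_const,
        ← Function.Surjective.iUnion_comp e.symm.surjective
          (fun ε => cubeSet n (kk - 1) (subCubeIdx n m ε) ×ˢ Set.Ico (t - r) (t + r))]
      rfl
    · intro j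
      have hvol : volume (czSet n Q t r)
          = 2 ^ n * volume (czSet n (cubeSet n (kk - 1) (subCubeIdx n m (e.symm j))) t r) := by
        rw [czSet_volume, czSet_volume, hQ]
        show volume (cubeSet n kk m) * _ = _
        rw [cubeSet_volume, cubeSet_volume, two_zpow_succ kk,
          ENNReal.ofReal_mul (by norm_num), ENNReal.ofReal_ofNat, mul_pow]
        ring
      have hcast : ((2 ^ n : ℕ) : ℝ≥0∞) = 2 ^ n := by push_cast; ring
      rw [hvol, hcast]
      exact (ENNReal.eq_div_iff (by positivity) (ENNReal.pow_ne_top ENNReal.ofNat_ne_top)).mpr rfl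
  · -- time split into 2 pieces
    have hcond : (r < 1 ∧ L < 2 * (Real.exp 2 * Real.exp t * r)) ∨
        (1 ≤ r ∧ L < 2 * (Real.exp t * Real.exp (2 * r))) := by
      rcases not_and_or.mp hsp with h | h <;> push_neg at h
      · exact Or.inl h
      · exact Or.inr h
    have hm := czAdm_time hAdm hcond (-1) le_rfl (by norm_num)
    have hp := czAdm_time hAdm hcond 1 (by norm_num) le_rfl
    rw [show t + (-1) * (r / 2) = t - r / 2 by ring] at hm
    rw [show t + 1 * (r / 2) = t + r / 2 by ring] at hp
    have hdisj : Disjoint (czSet n Q (t - r / 2) (r / 2)) (czSet n Q (t + r / 2) (r / 2)) := by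
      rw [Set.disjoint_left]
      rintro ⟨x, u⟩ hx hy
      have h1 : u < t - r / 2 + r / 2 := hx.2.2
      have h2 : t + r / 2 - r / 2 ≤ u := hy.2.1
      linarith
    refine ⟨2, Or.inl rfl,
      ![czSet n Q (t - r / 2) (r / 2), czSet n Q (t + r / 2) (r / 2)], ?_, ?_, ?_, ?_⟩
    · intro i
      fin_cases i
      · exact ⟨Q, L, c, t - r / 2, r / 2, ⟨⟨kk, m, hLk, hQ, hcc⟩, hm.1, hm.2.1, hm.2.2⟩, rfl⟩
      · exact ⟨Q, L, c, t + r / 2, r / 2, ⟨⟨kk, m, hLk, hQ, hcc⟩, hp.1, hp.2.1, hp.2.2⟩, rfl⟩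
    · intro i j hij
      fin_cases i <;> fin_cases j <;>
        first
          | exact absurd rfl hij
          | exact hdisj
          | exact hdisj.symm
    · have e1 : czSet n Q (t - r / 2) (r / 2) = Q ×ˢ Set.Ico (t - r) t := by
        rw [czSet, show t - r / 2 - r / 2 = t - r by ring, show t - r / 2 + r / 2 = t by ring]
      have e2 : czSet n Q (t + r / 2) (r / 2) = Q ×ˢ Set.Ico t (t + r) := by
        rw [czSet, show t + r / 2 - r / 2 = t by ring, show t + r / 2 + r / 2 = t + r by ring]
      calc czSet n Q t r = Q ×ˢ (Set.Ico (t - r) t ∪ Set.Ico t (t + r)) := by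
            rw [czSet, Set.Ico_union_Ico_eq_Ico (by linarith) (by linarith)]
        _ = czSet n Q (t - r / 2) (r / 2) ∪ czSet n Q (t + r / 2) (r / 2) := by
            rw [Set.prod_union, ← e1, ← e2]
        _ = _ := by
            ext p
            simp [Set.mem_iUnion, Fin.exists_fin_two]
    · intro i
      have hv : ∀ t', volume (czSet n Q t' (r / 2)) = volume Q * ENNReal.ofReal r := by
        intro t'; rw [czSet_volume, show 2 * (r / 2) = r by ring]
      have hvR : volume (czSet n Q t r) = 2 * (volume Q * ENNReal.ofReal r) := by
        rw [czSet_volume, ENNReal.ofReal_mul (by norm_num), ENNReal.ofReal_ofNat]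
        ring
      have hcast : ((2 : ℕ) : ℝ≥0∞) = 2 := by norm_num
      have key : ∀ t', volume (czSet n Q t' (r / 2)) = volume (czSet n Q t r) / ((2 : ℕ) : ℝ≥0∞) := by
        intro t'
        rw [hv, hvR, hcast]
        exact (ENNReal.eq_div_iff two_ne_zero ENNReal.ofNat_ne_top).mpr rfl
      fin_cases i
      · exact key (t - r / 2)
      · exact key (t + r / 2)
end

section
/- The Hardy–Littlewood maximal operator ℳ is bounded from L¹(ρ) to L^{1,∞}(ρ) and bounded on L^p(ρ) for all p ∈ (1, ∞]; that is, there exists C > 0 with ρ({x ∈ S : ℳf(x) > α}) ≤ C‖f‖_{L¹}/α for all f ∈ L¹(ρ) and α > 0, and for every p ∈ (1, ∞] there exists C_p > 0 with ‖ℳf‖_{L^p} ≤ C_p ‖f‖_{L^p} for all f ∈ L^p(ρ). -/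
open MeasureTheory Set Filter
open scoped ENNReal NNReal Topology

/-!
Calderón–Zygmund sets have an engulfing property: every `R` has an envelope `R⁺` with
`ρ(R⁺) ≤ 2^{16(n+1)} ρ(R)` that contains every Calderón–Zygmund set meeting `R` with at most
twice its measure. Indeed two overlapping sets of comparable measure have comparable time
lengths and side lengths, so one cube lies in the 16th dyadic ancestor of the other. The Vitali
covering lemma then gives the weak type `(1,1)` bound. Since `ℳf ≤ ℳ(f 1_{|f|>c}) + c`, the
measure of `{ℳf > 2c}` is controlled by the `L¹` norm of the part of `f` above `c`; summing over
the dyadic levels `c = 2^k` (Marcinkiewicz) gives the `L^p` bound, and `p = ∞` is immediate.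
-/

lemma Set.PairwiseDisjoint.countable_of_measure_ne_zero {α ι : Type*} [MeasurableSpace α]
    {μ : Measure α} [SFinite μ] {u : Set ι} {B : ι → Set α} (hd : u.PairwiseDisjoint B)
    (hm : ∀ i ∈ u, MeasurableSet (B i)) (h0 : ∀ i ∈ u, μ (B i) ≠ 0) : u.Countable := by
  have := Measure.countable_meas_pos_of_disjoint_iUnion (μ := μ) (As := fun i : u => B i)
    (fun i => hm i i.2) (fun i j hij => hd i.2 j.2 (Subtype.coe_injective.ne hij))
  rw [← Set.countable_coe_iff, ← Set.countable_univ_iff]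
  exact this.mono fun i _ => pos_iff_ne_zero.2 (h0 i i.2)

lemma ENNReal.exists_pos_le_ofReal {x : ℝ≥0∞} (hx : x ≠ ⊤) :
    ∃ C : ℝ, 0 < C ∧ x ≤ ENNReal.ofReal C :=
  ⟨x.toReal + 1, by positivity,
    (ENNReal.ofReal_toReal hx).symm.le.trans (ENNReal.ofReal_le_ofReal (by linarith))⟩

lemma ENNReal.two_mul_zpow_sub_one (m : ℤ) : (2 : ℝ≥0∞) * 2 ^ (m - 1) = 2 ^ m := by
  have h := ENNReal.zpow_add (x := 2) two_ne_zero ENNReal.ofNat_ne_top (m - 1) 1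
  rwa [sub_add_cancel, zpow_one, mul_comm, eq_comm] at h

lemma ENNReal.rpow_sub_one_mul_self {p : ℝ} (hp : 1 ≤ p) (x : ℝ≥0∞) :
    x ^ (p - 1) * x = x ^ p := by
  have h := ENNReal.rpow_add_of_nonneg (x := x) (p - 1) 1 (by linarith) zero_le_one
  rwa [sub_add_cancel, ENNReal.rpow_one, eq_comm] at h

lemma rpow_le_tsum_indicator_zpow {p : ℝ} (hp : 0 < p) (y : ℝ≥0∞) :
    y ^ p ≤ ∑' k : ℤ, {k : ℤ | 2 * 2 ^ k < y}.indicator (fun k => ((4 : ℝ≥0∞) * 2 ^ k) ^ p) k := by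
  rcases eq_or_ne y 0 with rfl | h0
  · simp [hp]
  rcases eq_or_ne y ⊤ with htop | htop
  · calc y ^ p = ∑' _ : ℕ, (1 : ℝ≥0∞) := by
          rw [htop, ENNReal.top_rpow_of_pos hp, ENNReal.tsum_const_eq_top_of_ne_zero one_ne_zero]
      _ ≤ ∑' k : ℕ, {k : ℤ | 2 * 2 ^ k < y}.indicator
            (fun k => ((4 : ℝ≥0∞) * 2 ^ k) ^ p) (k : ℤ) := by
          gcongr with k
          rw [indicator_of_mem (s := {k : ℤ | 2 * 2 ^ k < y}) (htop ▸ ENNReal.mul_lt_top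
            ENNReal.ofNat_lt_top (ENNReal.zpow_lt_top two_ne_zero ENNReal.ofNat_ne_top _))]
          refine ENNReal.one_le_rpow ?_ hp
          rw [zpow_natCast]
          exact one_le_mul (by norm_num) (one_le_pow₀ one_le_two)
      _ ≤ _ := ENNReal.tsum_comp_le_tsum_of_injective Nat.cast_injective _
  obtain ⟨m, hm, hm'⟩ := ENNReal.exists_mem_Ioc_zpow h0 htop ENNReal.one_lt_two ENNReal.ofNat_ne_top
  calc y ^ p ≤ ((4 : ℝ≥0∞) * 2 ^ (m - 1)) ^ p := by
        have h := ENNReal.two_mul_zpow_sub_one (m + 1)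
        rw [add_sub_cancel_right] at h
        rw [show (4 : ℝ≥0∞) = 2 * 2 by norm_num, mul_assoc, ENNReal.two_mul_zpow_sub_one, h]
        exact ENNReal.rpow_le_rpow hm' hp.le
    _ = {k : ℤ | 2 * 2 ^ k < y}.indicator (fun k => ((4 : ℝ≥0∞) * 2 ^ k) ^ p) (m - 1) :=
        (indicator_of_mem (s := {k : ℤ | 2 * 2 ^ k < y})
          (show 2 * 2 ^ (m - 1) < y by rwa [ENNReal.two_mul_zpow_sub_one])
          (fun k => ((4 : ℝ≥0∞) * 2 ^ k) ^ p)).symm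
    _ ≤ _ := ENNReal.le_tsum (m - 1)

lemma tsum_indicator_zpow_rpow_le {s : ℝ} (hs : 0 < s) (v : ℝ≥0∞) :
    ∑' k : ℤ, {k : ℤ | 2 ^ k < v}.indicator (fun k => ((2 : ℝ≥0∞) ^ k) ^ s) k
      ≤ (1 - 2 ^ (-s))⁻¹ * v ^ s := by
  rcases eq_or_ne v ⊤ with rfl | hv
  · rw [ENNReal.top_rpow_of_pos hs,
      ENNReal.mul_top (ENNReal.inv_ne_zero.2 (ENNReal.sub_ne_top ENNReal.one_ne_top))]
    exact le_top
  rcases eq_or_ne v 0 with rfl | hv0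
  · simp
  obtain ⟨K, hK, hK'⟩ := ENNReal.exists_mem_Ioc_zpow hv0 hv ENNReal.one_lt_two ENNReal.ofNat_ne_top
  have hsupp : Function.support ({k : ℤ | 2 ^ k < v}.indicator fun k => ((2 : ℝ≥0∞) ^ k) ^ s)
      ⊆ range fun j : ℕ => K - j := by
    intro k hk
    have hkv : (2 : ℝ≥0∞) ^ k < v := by
      by_contra h
      exact hk (indicator_of_notMem (s := {k : ℤ | 2 ^ k < v}) h _)
    have hkK : k ≤ K := by
      by_contra! h
      exact (hkv.trans_le hK').not_ge (ENNReal.zpow_le_of_le one_le_two (by omega))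
    exact ⟨(K - k).toNat, by dsimp only; omega⟩
  have hinj : Function.Injective fun j : ℕ => K - j := fun i j h => by simpa using h
  rw [← hinj.tsum_eq hsupp]
  calc ∑' j : ℕ, {k : ℤ | 2 ^ k < v}.indicator (fun k => ((2 : ℝ≥0∞) ^ k) ^ s) (K - j)
      ≤ ∑' j : ℕ, ((2 : ℝ≥0∞) ^ K) ^ s * (2 ^ (-s)) ^ j := by
        gcongr with j
        refine (indicator_le_self' (fun _ _ => zero_le) _).trans_eq ?_
        rw [← ENNReal.rpow_intCast_mul, ← ENNReal.rpow_intCast_mul, ← ENNReal.rpow_natCast,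
          ← ENNReal.rpow_mul, ← ENNReal.rpow_add _ _ two_ne_zero ENNReal.ofNat_ne_top]
        congr 1
        push_cast
        ring
    _ = ((2 : ℝ≥0∞) ^ K) ^ s * (1 - 2 ^ (-s))⁻¹ := by
        rw [ENNReal.tsum_mul_left, ENNReal.tsum_geometric]
    _ ≤ (1 - 2 ^ (-s))⁻¹ * v ^ s := by
        rw [mul_comm]
        gcongr

lemma tsum_zpow_rpow_mul_indicator_le {α : Type*} {p : ℝ} (hp : 1 < p) (g : α → ℝ≥0∞) (x : α) :
    ∑' k : ℤ, ((2 : ℝ≥0∞) ^ k) ^ (p - 1) * {x | 2 ^ k < g x}.indicator g x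
      ≤ (1 - 2 ^ (1 - p))⁻¹ * g x ^ p :=
  calc ∑' k : ℤ, ((2 : ℝ≥0∞) ^ k) ^ (p - 1) * {x | 2 ^ k < g x}.indicator g x
      = (∑' k : ℤ, {k : ℤ | 2 ^ k < g x}.indicator (fun k => ((2 : ℝ≥0∞) ^ k) ^ (p - 1)) k)
          * g x := by
        rw [← ENNReal.tsum_mul_right]
        refine tsum_congr fun k => ?_
        by_cases hk : 2 ^ k < g x <;> simp [hk]
    _ ≤ ((1 - 2 ^ (-(p - 1)))⁻¹ * g x ^ (p - 1)) * g x := by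
        gcongr
        exact tsum_indicator_zpow_rpow_le (by linarith) _
    _ = (1 - 2 ^ (1 - p))⁻¹ * g x ^ p := by
        rw [neg_sub, mul_assoc, ENNReal.rpow_sub_one_mul_self hp.le]

section Interpolation

variable {α : Type*} [MeasurableSpace α] {μ : Measure α}

lemma lintegral_rpow_le_tsum_measure_lt {F : α → ℝ≥0∞} {p : ℝ} (hp : 0 < p) :
    ∫⁻ x, F x ^ p ∂μ ≤ ∑' k : ℤ, (4 * 2 ^ k) ^ p * μ {x | 2 * 2 ^ k < F x} := by
  -- `F` need not be measurable, so its level sets are replaced by measurable hulls.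
  set S : ℤ → Set α := fun k => toMeasurable μ {x | 2 * 2 ^ k < F x}
  have hpt : ∀ x, F x ^ p ≤ ∑' k, (S k).indicator (fun _ => ((4 : ℝ≥0∞) * 2 ^ k) ^ p) x := by
    refine fun x => (rpow_le_tsum_indicator_zpow hp (F x)).trans (ENNReal.tsum_le_tsum fun k => ?_)
    by_cases hk : 2 * 2 ^ k < F x
    · rw [indicator_of_mem (s := {k : ℤ | 2 * 2 ^ k < F x}) hk,
        indicator_of_mem (subset_toMeasurable μ {x | 2 * 2 ^ k < F x} hk)]
    · rw [indicator_of_notMem (s := {k : ℤ | 2 * 2 ^ k < F x}) hk]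
      exact zero_le
  calc ∫⁻ x, F x ^ p ∂μ
      ≤ ∫⁻ x, ∑' k, (S k).indicator (fun _ => ((4 : ℝ≥0∞) * 2 ^ k) ^ p) x ∂μ :=
        lintegral_mono hpt
    _ = ∑' k : ℤ, (4 * 2 ^ k) ^ p * μ {x | 2 * 2 ^ k < F x} := by
        rw [lintegral_tsum fun k => (measurable_const.indicator
          (measurableSet_toMeasurable _ _)).aemeasurable]
        exact tsum_congr fun k => by
          rw [lintegral_indicator_const (measurableSet_toMeasurable _ _), measure_toMeasurable]

theorem lintegral_rpow_le_of_mul_measure_lt_le {F g : α → ℝ≥0∞} (hg : AEMeasurable g μ)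
    {A : ℝ≥0∞} (h : ∀ c, c * μ {x | 2 * c < F x} ≤ A * ∫⁻ x, {x | c < g x}.indicator g x ∂μ)
    {p : ℝ} (hp : 1 < p) :
    ∫⁻ x, F x ^ p ∂μ ≤ 4 ^ p * A * (1 - 2 ^ (1 - p))⁻¹ * ∫⁻ x, g x ^ p ∂μ := by
  have hind : ∀ c : ℝ≥0∞, AEMeasurable ({x | c < g x}.indicator g) μ :=
    fun c => hg.indicator₀ (nullMeasurableSet_lt aemeasurable_const hg)
  calc ∫⁻ x, F x ^ p ∂μ ≤ ∑' k : ℤ, (4 * 2 ^ k) ^ p * μ {x | 2 * 2 ^ k < F x} :=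
        lintegral_rpow_le_tsum_measure_lt (by linarith)
    _ = ∑' k : ℤ, 4 ^ p * ((2 : ℝ≥0∞) ^ k) ^ (p - 1) * (2 ^ k * μ {x | 2 * 2 ^ k < F x}) := by
        refine tsum_congr fun k => ?_
        rw [ENNReal.mul_rpow_of_nonneg _ _ (by linarith),
          ← ENNReal.rpow_sub_one_mul_self hp.le ((2 : ℝ≥0∞) ^ k)]
        ring
    _ ≤ ∑' k : ℤ, 4 ^ p * ((2 : ℝ≥0∞) ^ k) ^ (p - 1) *
          (A * ∫⁻ x, {x | 2 ^ k < g x}.indicator g x ∂μ) :=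
        ENNReal.tsum_le_tsum fun k => mul_le_mul_right (h _) _
    _ = 4 ^ p * A * ∫⁻ x, ∑' k : ℤ, ((2 : ℝ≥0∞) ^ k) ^ (p - 1) *
          {x | 2 ^ k < g x}.indicator g x ∂μ := by
        rw [lintegral_tsum fun k => (hind _).const_mul _, ← ENNReal.tsum_mul_left]
        refine tsum_congr fun k => ?_
        rw [lintegral_const_mul'' _ (hind _)]
        ring
    _ ≤ 4 ^ p * A * ∫⁻ x, (1 - 2 ^ (1 - p))⁻¹ * g x ^ p ∂μ := by
        gcongr with x
        exact tsum_zpow_rpow_mul_indicator_le hp g x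
    _ = 4 ^ p * A * (1 - 2 ^ (1 - p))⁻¹ * ∫⁻ x, g x ^ p ∂μ := by
        rw [lintegral_const_mul'' _ (hg.pow_const p)]
        ring

end Interpolation

def dyadicCube (n : ℕ) (k : ℤ) (m : Fin n → ℤ) : Set (Fin n → ℝ) :=
  {x | ∀ i, (m i : ℝ) * 2 ^ k ≤ x i ∧ x i < ((m i : ℝ) + 1) * 2 ^ k}

lemma mem_dyadicCube_iff {n : ℕ} {k : ℤ} {m : Fin n → ℤ} {x : Fin n → ℝ} :
    x ∈ dyadicCube n k m ↔ ∀ i, ⌊x i / 2 ^ k⌋ = m i := by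
  have h : (0 : ℝ) < 2 ^ k := by positivity
  simp only [dyadicCube, Set.mem_ofPred_eq, Int.floor_eq_iff, le_div_iff₀ h, div_lt_iff₀ h]

lemma floor_div_two_zpow_of_le {k K : ℤ} (hk : k ≤ K) (y : ℝ) :
    ⌊y / 2 ^ K⌋ = ⌊y / 2 ^ k⌋ / ((2 ^ (K - k).toNat : ℕ) : ℤ) := by
  rw [← Int.floor_div_natCast, div_div, Nat.cast_pow, Nat.cast_ofNat, ← zpow_natCast,
    Int.toNat_of_nonneg (sub_nonneg.2 hk), ← zpow_add₀ two_ne_zero, add_sub_cancel]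

lemma dyadicCube_subset_of_le {n : ℕ} {k K : ℤ} (hk : k ≤ K) {m M : Fin n → ℤ}
    {x : Fin n → ℝ} (hxm : x ∈ dyadicCube n k m) (hxM : x ∈ dyadicCube n K M) :
    dyadicCube n k m ⊆ dyadicCube n K M := by
  intro y hy
  rw [mem_dyadicCube_iff] at hxm hxM hy ⊢
  intro i
  rw [← hxM i, floor_div_two_zpow_of_le hk, floor_div_two_zpow_of_le hk, hy i, hxm i]

lemma dyadicCube_eq_pi (n : ℕ) (k : ℤ) (m : Fin n → ℤ) :
    dyadicCube n k m = univ.pi fun i => Ico ((m i : ℝ) * 2 ^ k) (((m i : ℝ) + 1) * 2 ^ k) := by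
  ext x
  simp [dyadicCube]

lemma measurableSet_dyadicCube (n : ℕ) (k : ℤ) (m : Fin n → ℤ) :
    MeasurableSet (dyadicCube n k m) := by
  rw [dyadicCube_eq_pi]
  exact .univ_pi fun _ => measurableSet_Ico

lemma volume_dyadicCube_prod_Ico (n : ℕ) (k : ℤ) (m : Fin n → ℤ) (a b : ℝ) :
    volume (dyadicCube n k m ×ˢ Ico a b) = ENNReal.ofReal ((2 ^ k) ^ n * (b - a)) := by
  rw [Measure.volume_eq_prod, Measure.prod_prod, dyadicCube_eq_pi, volume_pi_pi,
    Real.volume_Ico, ENNReal.ofReal_mul (by positivity), ENNReal.ofReal_pow (by positivity)]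
  simp [add_mul]

lemma nine_le_exp_ten : (9 : ℝ) ≤ Real.exp 10 := by
  linarith [Real.add_one_le_exp (10 : ℝ)]

lemma exp_ten_le : Real.exp 10 ≤ 30000 := by
  calc Real.exp 10 = Real.exp 1 ^ 10 := by rw [← Real.exp_nat_mul]; norm_num
    _ ≤ 2.7182818286 ^ 10 := by gcongr; exact Real.exp_one_lt_d9.le
    _ ≤ 30000 := by norm_num

def CZBounds (L t r : ℝ) : Prop :=
  0 < r ∧
    (r < 1 → Real.exp 2 * Real.exp t * r ≤ L ∧ L < Real.exp 8 * Real.exp t * r) ∧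
    (1 ≤ r → Real.exp t * Real.exp (2 * r) ≤ L ∧ L < Real.exp t * Real.exp (8 * r))

namespace CZBounds

open Real

variable {L t r L' t' r' : ℝ}

lemma le_of_exp_ten_mul_le (h : CZBounds L t r) (h' : CZBounds L' t' r')
    (ht : t' ≤ t + r + r') (hr : exp 10 * r' ≤ r) : L' ≤ L := by
  obtain ⟨-, hsmall, hbig⟩ := h
  obtain ⟨hr', hsmall', hbig'⟩ := h'
  have h8 : exp 8 ≤ exp 10 := exp_le_exp.2 (by norm_num)
  have h9 := nine_le_exp_ten
  refine le_of_lt ?_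
  rcases lt_or_ge r 1 with hr1 | hr1
  · obtain ⟨hL, -⟩ := hsmall hr1
    obtain ⟨-, hL'⟩ := hsmall' (by nlinarith)
    calc L' < exp 8 * exp t' * r' := hL'
      _ ≤ exp 8 * exp (t + 2) * r' := by gcongr; nlinarith
      _ = exp 2 * exp t * (exp 8 * r') := by rw [exp_add]; ring
      _ ≤ exp 2 * exp t * r := by gcongr; nlinarith
      _ ≤ L := hL
  obtain ⟨hL, -⟩ := hbig hr1
  rcases lt_or_ge r' 1 with hr1' | hr1'
  · obtain ⟨-, hL'⟩ := hsmall' hr1'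
    calc L' < exp 8 * exp t' * r' := hL'
      _ ≤ exp 8 * exp (t + r + 1) * r' := by gcongr; linarith
      _ = exp t * exp r * (exp 9 * r') := by
        rw [exp_add, exp_add, show (9 : ℝ) = 8 + 1 by norm_num, exp_add]; ring
      _ ≤ exp t * exp r * exp r := by
        gcongr
        calc exp 9 * r' ≤ exp 10 * r' := by gcongr; norm_num
          _ ≤ r + 1 := by linarith
          _ ≤ exp r := add_one_le_exp r
      _ = exp t * exp (2 * r) := by rw [mul_assoc, ← exp_add, two_mul]
      _ ≤ L := hL
  · obtain ⟨-, hL'⟩ := hbig' hr1'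
    calc L' < exp t' * exp (8 * r') := hL'
      _ ≤ exp (t + r + r') * exp (8 * r') := by gcongr
      _ = exp t * exp (r + 9 * r') := by rw [← exp_add, ← exp_add]; ring_nf
      _ ≤ exp t * exp (2 * r) := by gcongr; nlinarith
      _ ≤ L := hL

lemma le_exp_ten_mul_of_overlap {n : ℕ} (h : CZBounds L t r) (h' : CZBounds L' t' r')
    (hL : 0 < L) (ht : t ≤ t' + r' + r) (hvol : r' * L' ^ n ≤ 2 * (r * L ^ n)) :
    r' ≤ exp 10 * r := by
  by_contra! hlt
  have hLL : L ≤ L' := h'.le_of_exp_ten_mul_le h ht hlt.le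
  have hLn : 0 < L ^ n := by positivity
  have hpow : L ^ n ≤ L' ^ n := by gcongr
  have hrL : 0 < r * L ^ n := mul_pos h.1 hLn
  nlinarith [mul_le_mul_of_nonneg_left hpow h'.1.le, mul_lt_mul_of_pos_right hlt hLn,
    mul_le_mul_of_nonneg_right nine_le_exp_ten hrL.le]

lemma le_mul_of_overlap {n : ℕ} (hn : n ≠ 0) (h : CZBounds L t r) (h' : CZBounds L' t' r')
    (hL : 0 < L) (ht : t' ≤ t + r + r') (hvol : r' * L' ^ n ≤ 2 * (r * L ^ n)) :
    L' ≤ 65536 * L := by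
  rcases le_or_gt (exp 10 * r') r with hr | hr
  · linarith [h.le_of_exp_ten_mul_le h' ht hr]
  rcases le_or_gt L' L with hLL | hLL
  · linarith
  have hratio : (L' / L) ^ n < 2 * exp 10 := by
    rw [div_pow, div_lt_iff₀ (by positivity)]
    nlinarith [h'.1, mul_lt_mul_of_pos_right hr (by positivity : (0 : ℝ) < 2 * L ^ n)]
  have hle : L' / L ≤ (L' / L) ^ n := le_self_pow₀ ((one_le_div hL).2 hLL.le) hn
  exact (div_le_iff₀ hL).1 (by linarith [exp_ten_le])

end CZBounds

lemma IsCZSet.exists_eq_czSet {n : ℕ} {R : Set (Sp n)} (h : IsCZSet n R) :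
    ∃ k m t r, CZBounds (2 ^ k) t r ∧ R = czSet n (dyadicCube n k m) t r := by
  obtain ⟨Q, L, c, t, r, ⟨⟨k, m, rfl, rfl, -⟩, hb⟩, rfl⟩ := h
  exact ⟨k, m, t, r, hb, rfl⟩

lemma volume_czSet_dyadicCube (n : ℕ) (k : ℤ) (m : Fin n → ℤ) (t r : ℝ) :
    volume (czSet n (dyadicCube n k m) t r) = ENNReal.ofReal ((2 ^ k) ^ n * (2 * r)) := by
  rw [czSet, volume_dyadicCube_prod_Ico]
  ring_nf

lemma IsCZSet.measurableSet {n : ℕ} {R : Set (Sp n)} (h : IsCZSet n R) : MeasurableSet R := by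
  obtain ⟨k, m, t, r, -, rfl⟩ := IsCZSet.exists_eq_czSet h
  exact (measurableSet_dyadicCube n k m).prod measurableSet_Ico

def HasEngulfingProperty (n : ℕ) (𝒜 : Set (Set (Sp n))) (K : ℝ≥0∞) : Prop :=
  ∀ R ∈ 𝒜, ∃ E, volume E ≤ K * volume R ∧
    ∀ S ∈ 𝒜, (R ∩ S).Nonempty → volume S ≤ 2 * volume R → S ⊆ E

theorem hasEngulfingProperty_czSets {n : ℕ} (hn : n ≠ 0) :
    HasEngulfingProperty n {R | IsCZSet n R} (65536 ^ (n + 1)) := by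
  intro R hR
  obtain ⟨k, m, t, r, hb, rfl⟩ := IsCZSet.exists_eq_czSet hR
  -- The envelope is the 16th dyadic ancestor of the cube of `R` (located through the corner of
  -- the cube) times the time interval of `R` dilated by `2 ^ 16`.
  let M : Fin n → ℤ := fun i => ⌊(m i : ℝ) * 2 ^ k / 2 ^ (k + 16)⌋
  have hcube : dyadicCube n k m ⊆ dyadicCube n (k + 16) M :=
    dyadicCube_subset_of_le (x := fun i => (m i : ℝ) * 2 ^ k) (by omega)
      (mem_dyadicCube_iff.2 fun i => by
        simp only [mul_div_cancel_right₀ _ (by positivity : (2 : ℝ) ^ k ≠ 0), Int.floor_intCast])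
      (mem_dyadicCube_iff.2 fun i => rfl)
  refine ⟨czSet n (dyadicCube n (k + 16) M) t (65536 * r), le_of_eq ?_, ?_⟩
  · rw [volume_czSet_dyadicCube, volume_czSet_dyadicCube, zpow_add₀ two_ne_zero,
      ← ENNReal.ofReal_ofNat, ← ENNReal.ofReal_pow (by norm_num),
      ← ENNReal.ofReal_mul (by positivity : (0 : ℝ) ≤ 65536 ^ (n + 1))]
    ring_nf
  intro S hS hne hvol
  obtain ⟨k', m', t', r', hb', rfl⟩ := IsCZSet.exists_eq_czSet hS
  obtain ⟨x, ⟨hxQ, hxt⟩, hxQ', hxt'⟩ := hne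
  rw [volume_czSet_dyadicCube, volume_czSet_dyadicCube, ← ENNReal.ofReal_ofNat,
    ← ENNReal.ofReal_mul (by norm_num),
    ENNReal.ofReal_le_ofReal_iff (by have := hb.1; positivity)] at hvol
  have hL : (0 : ℝ) < 2 ^ k := by positivity
  have hvol' : r' * ((2 : ℝ) ^ k') ^ n ≤ 2 * (r * ((2 : ℝ) ^ k) ^ n) := by linarith
  have hr' := hb.le_exp_ten_mul_of_overlap hb' hL (by linarith [hxt.1, hxt'.2]) hvol'
  have hL' := hb.le_mul_of_overlap hn hb' hL (by linarith [hxt.2, hxt'.1]) hvol'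
  have hk : k' ≤ k + 16 := by
    rw [← zpow_le_zpow_iff_right₀ (by norm_num : (1 : ℝ) < 2), zpow_add₀ two_ne_zero]
    linarith
  refine prod_mono (dyadicCube_subset_of_le hk hxQ' (hcube hxQ)) (Ico_subset_Ico ?_ ?_) <;>
    linarith [hxt.1, hxt.2, hxt'.1, hxt'.2, mul_le_mul_of_nonneg_right exp_ten_le hb.1.le]

section MaximalFunction

variable {n : ℕ} {𝒜 : Set (Set (Sp n))} {K : ℝ≥0∞}

lemma le_maximalFn (f : Sp n → ℝ) {x : Sp n} {R : Set (Sp n)} (hR : R ∈ 𝒜) (hx : x ∈ R) :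
    (volume R)⁻¹ * ∫⁻ y in R, ‖f y‖₊ ≤ maximalFn n 𝒜 f x :=
  le_iSup₂_of_le R hR (le_iSup_of_le hx le_rfl)

lemma exists_mem_of_lt_maximalFn {f : Sp n → ℝ} {x : Sp n} {c : ℝ≥0∞}
    (h : c < maximalFn n 𝒜 f x) :
    ∃ R ∈ 𝒜, x ∈ R ∧ volume R ≠ 0 ∧ c * volume R ≤ ∫⁻ y in R, ‖f y‖₊ := by
  simp only [maximalFn, lt_iSup_iff] at h
  obtain ⟨R, hR, hx, hc⟩ := h
  have h0 : volume R ≠ 0 := fun h0 => by simp [Measure.restrict_eq_zero.2 h0] at hc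
  have htop : volume R ≠ ⊤ := fun htop => by simp [htop] at hc
  refine ⟨R, hR, hx, h0, ?_⟩
  calc c * volume R ≤ ((volume R)⁻¹ * ∫⁻ y in R, ‖f y‖₊) * volume R := by gcongr
    _ = ∫⁻ y in R, ‖f y‖₊ := by
      rw [mul_comm, ← mul_assoc, ENNReal.mul_inv_cancel h0 htop, one_mul]

lemma maximalFn_le_indicator_add (f : Sp n → ℝ) (c : ℝ≥0∞) (x : Sp n) :
    maximalFn n 𝒜 f x ≤ maximalFn n 𝒜 ({y | c < ‖f y‖ₑ}.indicator f) x + c := by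
  set g := {y | c < ‖f y‖ₑ}.indicator f
  refine iSup₂_le fun R hR => iSup_le fun hx => ?_
  have hfg : ∀ y, (‖f y‖₊ : ℝ≥0∞) ≤ ‖g y‖₊ + c := by
    intro y
    by_cases hy : c < ‖f y‖ₑ
    · rw [show g y = f y from indicator_of_mem (s := {y | c < ‖f y‖ₑ}) hy f]
      exact le_self_add
    · rw [show g y = 0 from indicator_of_notMem (s := {y | c < ‖f y‖ₑ}) hy f, nnnorm_zero,
        ENNReal.coe_zero, zero_add]
      exact not_lt.1 hy
  have hint : ∫⁻ y in R, ‖f y‖₊ ≤ (∫⁻ y in R, ‖g y‖₊) + c * volume R := by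
    rw [← setLIntegral_const, ← lintegral_add_right _ measurable_const]
    exact lintegral_mono hfg
  calc (volume R)⁻¹ * ∫⁻ y in R, ‖f y‖₊
      ≤ (volume R)⁻¹ * ((∫⁻ y in R, ‖g y‖₊) + c * volume R) := by gcongr
    _ = (volume R)⁻¹ * (∫⁻ y in R, ‖g y‖₊) + c * ((volume R)⁻¹ * volume R) := by ring
    _ ≤ maximalFn n 𝒜 g x + c * 1 :=
      add_le_add (le_maximalFn g hR hx) (mul_le_mul_right (ENNReal.inv_mul_le_one _) c)
    _ = maximalFn n 𝒜 g x + c := by rw [mul_one]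

theorem HasEngulfingProperty.exists_disjoint_subfamily
    (hengulf : HasEngulfingProperty n 𝒜 K) (hmeas : ∀ R ∈ 𝒜, MeasurableSet R)
    {E : Set (Sp n)} {B : Sp n → Set (Sp n)} (hB𝒜 : ∀ x ∈ E, B x ∈ 𝒜) (hxB : ∀ x ∈ E, x ∈ B x)
    (hB0 : ∀ x ∈ E, volume (B x) ≠ 0) {M : ℝ≥0∞} (hM : M ≠ ⊤)
    (hBM : ∀ x ∈ E, volume (B x) ≤ M) :
    ∃ u ⊆ E, u.Countable ∧ u.PairwiseDisjoint B ∧ volume E ≤ K * ∑' b : u, volume (B b) := by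
  have hBtop : ∀ x ∈ E, volume (B x) ≠ ⊤ := fun x hx => ne_top_of_le_ne_top hM (hBM x hx)
  choose! Env hEnv hEnvsub using fun x (hx : x ∈ E) => hengulf (B x) (hB𝒜 x hx)
  obtain ⟨u, huE, hdisj, hcover⟩ := Vitali.exists_disjoint_subfamily_covering_enlargement B E
    (fun x => (volume (B x)).toReal) 2 one_lt_two (fun _ _ => ENNReal.toReal_nonneg)
    M.toReal (fun x hx => ENNReal.toReal_mono hM (hBM x hx)) (fun x hx => ⟨x, hxB x hx⟩)
  have hu : u.Countable := hdisj.countable_of_measure_ne_zero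
    (fun b hb => hmeas _ (hB𝒜 b (huE hb))) (fun b hb => hB0 b (huE hb))
  have : Countable u := hu.to_subtype
  have hEcover : E ⊆ ⋃ b : u, Env b := by
    intro x hx
    obtain ⟨b, hbu, hne, hle⟩ := hcover x hx
    have hle' : volume (B x) ≤ 2 * volume (B b) := by
      rwa [← ENNReal.toReal_le_toReal (hBtop x hx)
        (ENNReal.mul_ne_top ENNReal.ofNat_ne_top (hBtop b (huE hbu))), ENNReal.toReal_mul,
        ENNReal.toReal_ofNat]
    exact mem_iUnion.2 ⟨⟨b, hbu⟩, hEnvsub b (huE hbu) (B x) (hB𝒜 x hx) (by rwa [inter_comm])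
      hle' (hxB x hx)⟩
  refine ⟨u, huE, hu, hdisj, ?_⟩
  calc volume E ≤ ∑' b : u, volume (Env b) := (measure_mono hEcover).trans (measure_iUnion_le _)
    _ ≤ ∑' b : u, K * volume (B b) := ENNReal.tsum_le_tsum fun b => hEnv b (huE b.2)
    _ = K * ∑' b : u, volume (B b) := ENNReal.tsum_mul_left

theorem mul_volume_lt_maximalFn_le (hK : K ≠ 0) (hmeas : ∀ R ∈ 𝒜, MeasurableSet R)
    (hengulf : HasEngulfingProperty n 𝒜 K) (f : Sp n → ℝ) (c : ℝ≥0∞) :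
    c * volume {x | c < maximalFn n 𝒜 f x} ≤ K * ∫⁻ x, ‖f x‖₊ := by
  set I := ∫⁻ x, ‖f x‖₊
  set E := {x | c < maximalFn n 𝒜 f x}
  rcases eq_or_ne I ⊤ with hI | hI
  · rw [hI, ENNReal.mul_top hK]
    exact le_top
  rcases eq_or_ne c 0 with rfl | hc
  · simp
  choose! B hB𝒜 hxB hB0 hcB using fun x (hx : x ∈ E) => exists_mem_of_lt_maximalFn hx
  have hBle : ∀ x ∈ E, volume (B x) ≤ I / c := fun x hx =>
    (ENNReal.le_div_iff_mul_le (.inl hc) (.inr hI)).2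
      ((mul_comm _ _).trans_le ((hcB x hx).trans (setLIntegral_le_lintegral _ _)))
  obtain ⟨u, huE, hu, hdisj, hEu⟩ := hengulf.exists_disjoint_subfamily hmeas hB𝒜 hxB hB0
    (ENNReal.div_ne_top hI hc) hBle
  have : Countable u := hu.to_subtype
  calc c * volume E ≤ c * (K * ∑' b : u, volume (B b)) := by gcongr
    _ = K * ∑' b : u, c * volume (B b) := by rw [ENNReal.tsum_mul_left]; ring
    _ ≤ K * ∑' b : u, ∫⁻ y in B b, ‖f y‖₊ := by
        gcongr with b
        exact hcB b (huE b.2)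
    _ = K * ∫⁻ y in ⋃ b : u, B b, ‖f y‖₊ := by
        rw [lintegral_iUnion (fun b : u => hmeas _ (hB𝒜 b (huE b.2)))
          (fun (b b' : u) hbb' => hdisj b.2 b'.2 (Subtype.coe_injective.ne hbb'))]
    _ ≤ K * I := by
        gcongr
        exact setLIntegral_le_lintegral _ _

theorem mul_volume_two_mul_lt_maximalFn_le (hK : K ≠ 0)
    (hmeas : ∀ R ∈ 𝒜, MeasurableSet R) (hengulf : HasEngulfingProperty n 𝒜 K)
    (f : Sp n → ℝ) (c : ℝ≥0∞) :
    c * volume {x | 2 * c < maximalFn n 𝒜 f x}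
      ≤ K * ∫⁻ x, {x | c < ‖f x‖ₑ}.indicator (fun x => ‖f x‖ₑ) x := by
  set g := {y | c < ‖f y‖ₑ}.indicator f
  have hsub : {x | 2 * c < maximalFn n 𝒜 f x} ⊆ {x | c < maximalFn n 𝒜 g x} := by
    intro x hx
    refine lt_of_not_ge fun (hle : maximalFn n 𝒜 g x ≤ c) => ?_
    exact ((maximalFn_le_indicator_add f c x).trans (by rw [two_mul]; gcongr)).not_gt hx
  calc c * volume {x | 2 * c < maximalFn n 𝒜 f x}
      ≤ c * volume {x | c < maximalFn n 𝒜 g x} := mul_le_mul_right (measure_mono hsub) c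
    _ ≤ K * ∫⁻ x, ‖g x‖₊ := mul_volume_lt_maximalFn_le hK hmeas hengulf g c
    _ = K * ∫⁻ x, {x | c < ‖f x‖ₑ}.indicator (fun x => ‖f x‖ₑ) x := by
      simp_rw [g, ← enorm_eq_nnnorm, enorm_indicator_eq_indicator_enorm]

lemma maximalFn_le_eLpNormEssSup (f : Sp n → ℝ) (x : Sp n) :
    maximalFn n 𝒜 f x ≤ eLpNormEssSup f volume := by
  set g := {y | eLpNormEssSup f volume < ‖f y‖ₑ}.indicator f
  have hg0 : ∀ᵐ y ∂volume, (‖g y‖₊ : ℝ≥0∞) = 0 := by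
    filter_upwards [enorm_ae_le_eLpNormEssSup f volume] with y hy
    simp [g, indicator_of_notMem (s := {y | eLpNormEssSup f volume < ‖f y‖ₑ}) (not_lt.2 hy)]
  have hg : ∀ R, ∫⁻ y in R, ‖g y‖₊ = 0 := fun R =>
    (lintegral_congr_ae (ae_restrict_of_ae hg0)).trans lintegral_zero
  calc maximalFn n 𝒜 f x ≤ maximalFn n 𝒜 g x + eLpNormEssSup f volume :=
        maximalFn_le_indicator_add f _ x
    _ = eLpNormEssSup f volume := by simp [maximalFn, hg]

theorem exists_volume_lt_maximalFn_le (hK : K ≠ 0) (hKtop : K ≠ ⊤)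
    (hmeas : ∀ R ∈ 𝒜, MeasurableSet R) (hengulf : HasEngulfingProperty n 𝒜 K) :
    ∃ C : ℝ, 0 < C ∧ ∀ (f : Sp n → ℝ) (α : ℝ), 0 < α →
      volume {x | ENNReal.ofReal α < maximalFn n 𝒜 f x}
        ≤ ENNReal.ofReal (C / α) * ∫⁻ x, ‖f x‖₊ := by
  obtain ⟨C, hC, hKC⟩ := ENNReal.exists_pos_le_ofReal hKtop
  refine ⟨C, hC, fun f α hα => ?_⟩
  have hα0 : ENNReal.ofReal α ≠ 0 := (ENNReal.ofReal_pos.2 hα).ne'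
  calc volume {x | ENNReal.ofReal α < maximalFn n 𝒜 f x}
      ≤ K * (∫⁻ x, ‖f x‖₊) / ENNReal.ofReal α :=
        (ENNReal.le_div_iff_mul_le (.inl hα0) (.inl ENNReal.ofReal_ne_top)).2 <| by
          rw [mul_comm]
          exact mul_volume_lt_maximalFn_le hK hmeas hengulf f _
    _ ≤ ENNReal.ofReal C * (∫⁻ x, ‖f x‖₊) / ENNReal.ofReal α := by gcongr
    _ = ENNReal.ofReal (C / α) * ∫⁻ x, ‖f x‖₊ := by
        rw [ENNReal.ofReal_div_of_pos hα, div_eq_mul_inv, div_eq_mul_inv]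
        ring

theorem exists_lpNormE_maximalFn_le (hK : K ≠ 0) (hKtop : K ≠ ⊤)
    (hmeas : ∀ R ∈ 𝒜, MeasurableSet R) (hengulf : HasEngulfingProperty n 𝒜 K)
    {p : ℝ≥0∞} (hp : 1 < p) :
    ∃ C : ℝ, 0 < C ∧ ∀ f : Sp n → ℝ, MemLp f p volume →
      lpNormE (maximalFn n 𝒜 f) p volume ≤ ENNReal.ofReal C * eLpNorm f p volume := by
  rcases eq_or_ne p ⊤ with rfl | hp_top
  · refine ⟨1, one_pos, fun f _ => ?_⟩
    rw [lpNormE, if_pos rfl, ENNReal.ofReal_one, one_mul, eLpNorm_exponent_top]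
    exact essSup_le_of_ae_le _ (.of_forall (maximalFn_le_eLpNormEssSup f))
  set q := p.toReal
  have hq : 1 < q := by simpa using (ENNReal.toReal_lt_toReal ENNReal.one_ne_top hp_top).2 hp
  set C := 4 ^ q * K * (1 - 2 ^ (1 - q))⁻¹
  have hC : C ^ (1 / q) ≠ ⊤ := by
    refine ENNReal.rpow_ne_top_of_nonneg (by positivity) (ENNReal.mul_ne_top
      (ENNReal.mul_ne_top (by simp) hKtop) (ENNReal.inv_ne_top.2 ?_))
    exact (tsub_pos_of_lt (ENNReal.rpow_lt_one_of_one_lt_of_neg ENNReal.one_lt_two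
      (by linarith))).ne'
  obtain ⟨C', hC', hCC'⟩ := ENNReal.exists_pos_le_ofReal hC
  refine ⟨C', hC', fun f hf => ?_⟩
  rw [lpNormE, if_neg hp_top, eLpNorm_eq_lintegral_rpow_enorm_toReal (by positivity) hp_top]
  calc (∫⁻ x, maximalFn n 𝒜 f x ^ q) ^ (1 / q) ≤ (C * ∫⁻ x, ‖f x‖ₑ ^ q) ^ (1 / q) := by
        gcongr
        exact lintegral_rpow_le_of_mul_measure_lt_le hf.1.enorm
          (mul_volume_two_mul_lt_maximalFn_le hK hmeas hengulf f) hq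
    _ = C ^ (1 / q) * (∫⁻ x, ‖f x‖ₑ ^ q) ^ (1 / q) := ENNReal.mul_rpow_of_nonneg _ _ (by positivity)
    _ ≤ ENNReal.ofReal C' * (∫⁻ x, ‖f x‖ₑ ^ q) ^ (1 / q) := by gcongr

end MaximalFunction

/-- The Hardy–Littlewood maximal operator `ℳ` (associated with the family
`ℛ` of Calderón–Zygmund sets) is bounded from `L¹(ρ)` to `L^{1,∞}(ρ)`, and bounded on
`L^p(ρ)` for all `p ∈ (1, ∞]`. -/
theorem maximal_weak_one_one_and_strong_p (n : ℕ) (hn : 1 ≤ n) :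
    (∃ C : ℝ, 0 < C ∧ ∀ f : Sp n → ℝ, Integrable f volume → ∀ α : ℝ, 0 < α →
      volume {x : Sp n | ENNReal.ofReal α < maximalFn n {R | IsCZSet n R} f x}
        ≤ ENNReal.ofReal (C / α) * ∫⁻ x, ‖f x‖₊ ∂volume) ∧
    (∀ p : ℝ≥0∞, 1 < p → ∃ C : ℝ, 0 < C ∧ ∀ f : Sp n → ℝ, MemLp f p volume →
      lpNormE (maximalFn n {R | IsCZSet n R} f) p volume
        ≤ ENNReal.ofReal C * eLpNorm f p volume) := by
  have hK : (65536 : ℝ≥0∞) ^ (n + 1) ≠ 0 := pow_ne_zero _ (by norm_num)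
  have hKtop : (65536 : ℝ≥0∞) ^ (n + 1) ≠ ⊤ := ENNReal.pow_ne_top (by norm_num)
  have hmeas : ∀ R ∈ {R | IsCZSet n R}, MeasurableSet R := fun R hR => IsCZSet.measurableSet hR
  have hengulf := hasEngulfingProperty_czSets (by omega : n ≠ 0)
  obtain ⟨C, hC, hweak⟩ := exists_volume_lt_maximalFn_le hK hKtop hmeas hengulf
  exact ⟨⟨C, hC, fun f _ => hweak f⟩,
    fun p hp => exists_lpNormE_maximalFn_le hK hKtop hmeas hengulf hp⟩
end

section
/- Let R = Q × [t−r, t+r) ∈ ℛ with r ≥ 1 and with Q a dyadic cube of side length L satisfying eᵗe^{8r}/2 ≤ L < eᵗe^{8r}. Then R₂ = Q × [t−r, t+3r) is a parent of R; moreover the set R' = Q × [t+r, t+3r) belongs to ℛ, R₂ = R ∪ R', ρ(R) = ρ(R') = ρ(R₂)/2, and R₂ is also a parent of R'. -/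
open MeasureTheory Set Filter
open scoped ENNReal NNReal Topology

-- aux lemma: volume of product
lemma vol_prod {n : ℕ} (Q : Set (Fin n → ℝ)) (a b : ℝ) :
    volume (Q ×ˢ Set.Ico a b) = volume Q * ENNReal.ofReal (b - a) := by
  rw [Measure.volume_eq_prod, Measure.prod_prod, Real.volume_Ico]

/-- Let `R = Q × [t−r, t+r) ∈ ℛ` with `r ≥ 1` and
`eᵗe^{8r}/2 ≤ L < eᵗe^{8r}`. Then `R₂ = Q × [t−r, t+3r)` is a parent of `R`; moreover
`R' = Q × [t+r, t+3r)` belongs to `ℛ`, `R₂ = R ∪ R'`, `ρ(R) = ρ(R') = ρ(R₂)/2`, and `R₂`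
is also a parent of `R'`. -/
theorem parent_vertical_up (n : ℕ) (hn : 1 ≤ n) (Q : Set (Fin n → ℝ)) (L : ℝ)
    (c : Fin n → ℝ) (t r : ℝ) (h : CZParam n Q L c t r) (hr : 1 ≤ r)
    (hL₁ : Real.exp t * Real.exp (8 * r) / 2 ≤ L)
    (hL₂ : L < Real.exp t * Real.exp (8 * r)) :
    IsParent n (Q ×ˢ Set.Ico (t - r) (t + 3 * r)) (czSet n Q t r) ∧
    IsCZSet n (Q ×ˢ Set.Ico (t + r) (t + 3 * r)) ∧
    Q ×ˢ Set.Ico (t - r) (t + 3 * r) = czSet n Q t r ∪ Q ×ˢ Set.Ico (t + r) (t + 3 * r) ∧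
    volume (czSet n Q t r) = volume (Q ×ˢ Set.Ico (t + r) (t + 3 * r)) ∧
    volume (czSet n Q t r) = volume (Q ×ˢ Set.Ico (t - r) (t + 3 * r)) / 2 ∧
    IsParent n (Q ×ˢ Set.Ico (t - r) (t + 3 * r)) (Q ×ˢ Set.Ico (t + r) (t + 3 * r)) := by
  have hQ := h.1
  have hr0 : (0:ℝ) < r := h.2.1
  have hrpos : (0:ℝ) < r := hr0
  -- basic exponential facts
  have hexp2 : (2:ℝ) ≤ Real.exp (3 * r) := by
    have := Real.add_one_le_exp (3 * r); linarith
  have hexp2' : (2:ℝ) ≤ Real.exp (4 * r) := by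
    have := Real.add_one_le_exp (4 * r); linarith
  -- CZParam for R' = czSet n Q (t + 2r) r
  have hCZ' : CZParam n Q L c (t + 2 * r) r := by
    refine ⟨hQ, hr0, fun h1 => absurd h1 (by linarith), fun _ => ⟨?_, ?_⟩⟩
    · have key : Real.exp (t + 2 * r) * Real.exp (2 * r) * 2 ≤ Real.exp t * Real.exp (8 * r) := by
        rw [← Real.exp_add, ← Real.exp_add]
        calc Real.exp (t + 2 * r + 2 * r) * 2 ≤ Real.exp (t + 2 * r + 2 * r) * Real.exp (4 * r) := by
              exact mul_le_mul_of_nonneg_left hexp2' (Real.exp_pos _).le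
          _ = Real.exp (t + 8 * r) := by rw [← Real.exp_add]; ring_nf
      linarith
    · calc L < Real.exp t * Real.exp (8 * r) := hL₂
        _ = Real.exp (t + 2 * r) * Real.exp (6 * r) := by
            rw [← Real.exp_add, ← Real.exp_add]; ring_nf
        _ ≤ Real.exp (t + 2 * r) * Real.exp (8 * r) := by
            exact mul_le_mul_of_nonneg_left (Real.exp_le_exp.2 (by linarith)) (Real.exp_pos _).le
  -- CZParam for R₂ = czSet n Q (t + r) (2r)
  have hCZ₂ : CZParam n Q L c (t + r) (2 * r) := by
    refine ⟨hQ, by linarith, fun h1 => absurd h1 (by linarith), fun _ => ⟨?_, ?_⟩⟩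
    · have key : Real.exp (t + r) * Real.exp (2 * (2 * r)) * 2 ≤ Real.exp t * Real.exp (8 * r) := by
        rw [← Real.exp_add, ← Real.exp_add]
        calc Real.exp (t + r + 2 * (2 * r)) * 2
            ≤ Real.exp (t + r + 2 * (2 * r)) * Real.exp (3 * r) := by
              exact mul_le_mul_of_nonneg_left hexp2 (Real.exp_pos _).le
          _ = Real.exp (t + 8 * r) := by rw [← Real.exp_add]; ring_nf
      linarith
    · calc L < Real.exp t * Real.exp (8 * r) := hL₂
        _ = Real.exp (t + r) * Real.exp (7 * r) := by
            rw [← Real.exp_add, ← Real.exp_add]; ring_nf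
        _ ≤ Real.exp (t + r) * Real.exp (8 * (2 * r)) := by
            exact mul_le_mul_of_nonneg_left (Real.exp_le_exp.2 (by linarith)) (Real.exp_pos _).le
  -- set identifications
  have hR' : Q ×ˢ Set.Ico (t + r) (t + 3 * r) = czSet n Q (t + 2 * r) r := by
    unfold czSet; congr 2 <;> ring
  have hR₂ : Q ×ˢ Set.Ico (t - r) (t + 3 * r) = czSet n Q (t + r) (2 * r) := by
    unfold czSet; congr 2 <;> ring
  have hCZS' : IsCZSet n (Q ×ˢ Set.Ico (t + r) (t + 3 * r)) := ⟨Q, L, c, _, _, hCZ', hR'⟩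
  have hCZS₂ : IsCZSet n (Q ×ˢ Set.Ico (t - r) (t + 3 * r)) := ⟨Q, L, c, _, _, hCZ₂, hR₂⟩
  have hCZS : IsCZSet n (czSet n Q t r) := ⟨Q, L, c, t, r, h, rfl⟩
  -- union
  have hunion : Q ×ˢ Set.Ico (t - r) (t + 3 * r)
      = czSet n Q t r ∪ Q ×ˢ Set.Ico (t + r) (t + 3 * r) := by
    unfold czSet
    rw [← Set.prod_union, Set.Ico_union_Ico_eq_Ico (by linarith) (by linarith)]
  -- disjointness
  have hdisj : Disjoint (czSet n Q t r) (Q ×ˢ Set.Ico (t + r) (t + 3 * r)) := by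
    rw [Set.disjoint_left]
    rintro ⟨x, s⟩ ⟨-, hs1, hs2⟩ ⟨-, hs3, -⟩
    exact absurd hs3 (not_le.2 hs2)
  -- volumes
  have hvolR : volume (czSet n Q t r) = volume Q * ENNReal.ofReal (2 * r) := by
    rw [czSet, vol_prod]; ring_nf
  have hvolR' : volume (Q ×ˢ Set.Ico (t + r) (t + 3 * r))
      = volume Q * ENNReal.ofReal (2 * r) := by
    rw [vol_prod]; ring_nf
  have hvolR₂ : volume (Q ×ˢ Set.Ico (t - r) (t + 3 * r))
      = 2 * (volume Q * ENNReal.ofReal (2 * r)) := by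
    rw [vol_prod]
    have : t + 3 * r - (t - r) = 2 * (2 * r) := by ring
    rw [this, ENNReal.ofReal_mul (by norm_num), ENNReal.ofReal_ofNat]
    ring
  have hveq : volume (czSet n Q t r) = volume (Q ×ˢ Set.Ico (t + r) (t + 3 * r)) := by
    rw [hvolR, hvolR']
  have hhalf : volume (czSet n Q t r) = volume (Q ×ˢ Set.Ico (t - r) (t + 3 * r)) / 2 := by
    rw [hvolR, hvolR₂, mul_comm (2:ℝ≥0∞), mul_div_assoc, ENNReal.div_self (by norm_num) (by norm_num), mul_one]
  -- generic parent construction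
  have hparent : ∀ X : Set (Sp n), IsCZSet n X →
      volume X = volume Q * ENNReal.ofReal (2 * r) →
      (X = czSet n Q t r ∨ X = Q ×ˢ Set.Ico (t + r) (t + 3 * r)) →
      IsParent n (Q ×ˢ Set.Ico (t - r) (t + 3 * r)) X := by
    intro X hX hvX hcase
    refine ⟨hCZS₂, hX, ⟨2, Or.inl rfl,
      ![czSet n Q t r, Q ×ˢ Set.Ico (t + r) (t + 3 * r)], ?_, ?_, ?_, ?_⟩, ?_, ?_⟩
    · intro i; fin_cases i
      · exact hCZS
      · exact hCZS'
    · intro i j hij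
      fin_cases i <;> fin_cases j <;>
        simp only [Function.onFun, Matrix.cons_val_zero, Matrix.cons_val_one,
          Matrix.head_cons] <;>
        first
          | exact absurd rfl hij
          | exact hdisj
          | exact hdisj.symm
    · rw [hunion]; ext p; simp [Fin.exists_fin_two]
    · rcases hcase with h1 | h1
      · exact ⟨0, h1.symm⟩
      · exact ⟨1, h1.symm⟩
    · rw [hvX, hvolR₂]
      calc (3/2 : ℝ≥0∞) * (volume Q * ENNReal.ofReal (2*r))
          ≤ 2 * (volume Q * ENNReal.ofReal (2*r)) := by
            gcongr
            exact ENNReal.div_le_of_le_mul (by norm_num)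
        _ = _ := rfl
    · rw [hvX, hvolR₂]
      have h2 : (2 : ℝ≥0∞) ≤ (max 3 (2 ^ n) : ℕ) := by
        have : (2:ℕ) ≤ max 3 (2 ^ n) := le_trans (by norm_num) (le_max_left _ _)
        exact_mod_cast this
      gcongr
  exact ⟨hparent _ hCZS hvolR (Or.inl rfl), hCZS', hunion, hveq, hhalf,
    hparent _ hCZS' hvolR' (Or.inr rfl)⟩
end

section
/- Let R = Q × [t−r, t+r) ∈ ℛ with r ≥ 1 and with Q a dyadic cube of side length L satisfying eᵗe^{8r}/2 ≤ L < eᵗe^{8r}. Then R₃ = Q × [t−5r, t+r) is a parent of R; moreover the set R'' = Q × [t−5r, t−r) belongs to ℛ, R₃ = R ∪ R'', ρ(R) = ρ(R'')/2 = ρ(R₃)/3, and R₃ is also a parent of R''. -/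
open MeasureTheory Set Filter
open scoped ENNReal NNReal Topology

/-!
All three sets share the base `Q`, so `R₃` is the disjoint union of `R` on top of `R''`, and
their volumes are proportional to their heights `2r`, `4r`, `6r`. They are Calderón–Zygmund
sets with centres and radii `(t, r)`, `(t - 3r, 2r)`, `(t - 2r, 3r)`: the condition for
`(s, ρ)` is `e^{s+2ρ} ≤ L < e^{s+8ρ}`, and `e^{t+8r}/2 ≤ L < e^{t+8r}` gives this as soon as
`s + 2ρ + 1 ≤ t + 8r ≤ s + 8ρ`, because `2 ≤ e`.
-/

section

variable {n : ℕ}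

lemma Real.two_mul_exp_le_exp {x y : ℝ} (h : x + 1 ≤ y) : 2 * Real.exp x ≤ Real.exp y :=
  calc 2 * Real.exp x ≤ Real.exp 1 * Real.exp x := by
        gcongr; linarith [Real.add_one_le_exp 1]
    _ = Real.exp (x + 1) := by rw [← Real.exp_add, add_comm]
    _ ≤ Real.exp y := Real.exp_le_exp.2 h

lemma volume_prod_Ico {X : Type*} [MeasureSpace X] [SigmaFinite (volume : Measure X)]
    (Q : Set X) (a b : ℝ) : volume (Q ×ˢ Ico a b) = volume Q * ENNReal.ofReal (b - a) := by
  rw [Measure.volume_eq_prod, Measure.prod_prod, Real.volume_Ico]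

lemma volume_prod_Ico_eq_mul {X : Type*} [MeasureSpace X] [SigmaFinite (volume : Measure X)]
    (Q : Set X) {a b a' b' : ℝ} (k : ℕ) (h : b' - a' = k * (b - a)) :
    volume (Q ×ˢ Ico a' b') = k * volume (Q ×ˢ Ico a b) := by
  rw [volume_prod_Ico, volume_prod_Ico, h, ENNReal.ofReal_mul (Nat.cast_nonneg k),
    ENNReal.ofReal_natCast, mul_left_comm]

lemma isCZSet_prod_Ico {Q : Set (Fin n → ℝ)} {L : ℝ} {c : Fin n → ℝ} {s ρ : ℝ}
    (hQ : IsDyadicCube n Q L c) (hρ : 1 ≤ ρ) (hlow : Real.exp (s + 2 * ρ) ≤ L)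
    (hup : L < Real.exp (s + 8 * ρ)) : IsCZSet n (Q ×ˢ Ico (s - ρ) (s + ρ)) := by
  refine ⟨Q, L, c, s, ρ, ⟨hQ, by linarith, fun h => absurd h hρ.not_gt, fun _ => ?_⟩, rfl⟩
  rw [← Real.exp_add, ← Real.exp_add]
  exact ⟨hlow, hup⟩

lemma isParent_of_disjoint_union {M R R' : Set (Sp n)} (hM : IsCZSet n M) (hR : IsCZSet n R)
    (hR' : IsCZSet n R') (hdisj : Disjoint R R') (hunion : M = R ∪ R')
    (hlow : (3 / 2 : ℝ≥0∞) * volume R ≤ volume M) (hup : volume M ≤ 3 * volume R) :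
    IsParent n M R := by
  refine ⟨hM, hR, ⟨2, Or.inl rfl, ![R, R'], ?_, ?_, ?_, 0, rfl⟩, hlow, ?_⟩
  · intro i
    fin_cases i <;> assumption
  · intro i j hij
    fin_cases i <;> fin_cases j <;> first | exact absurd rfl hij | exact hdisj | exact hdisj.symm
  · ext x
    simp [hunion, Fin.exists_fin_two]
  · refine hup.trans (mul_le_mul_left ?_ _)
    exact_mod_cast le_max_left 3 (2 ^ n)

end

theorem parent_vertical_down_general (n : ℕ) (Q : Set (Fin n → ℝ)) (L : ℝ)
    (c : Fin n → ℝ) (t r : ℝ) (h : CZParam n Q L c t r) (hr : 1 ≤ r)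
    (hL₁ : Real.exp t * Real.exp (8 * r) / 2 ≤ L)
    (hL₂ : L < Real.exp t * Real.exp (8 * r)) :
    IsParent n (Q ×ˢ Set.Ico (t - 5 * r) (t + r)) (czSet n Q t r) ∧
    IsCZSet n (Q ×ˢ Set.Ico (t - 5 * r) (t - r)) ∧
    Q ×ˢ Set.Ico (t - 5 * r) (t + r) = czSet n Q t r ∪ Q ×ˢ Set.Ico (t - 5 * r) (t - r) ∧
    volume (czSet n Q t r) = volume (Q ×ˢ Set.Ico (t - 5 * r) (t - r)) / 2 ∧
    volume (czSet n Q t r) = volume (Q ×ˢ Set.Ico (t - 5 * r) (t + r)) / 3 ∧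
    IsParent n (Q ×ˢ Set.Ico (t - 5 * r) (t + r)) (Q ×ˢ Set.Ico (t - 5 * r) (t - r)) := by
  rw [← Real.exp_add] at hL₁ hL₂
  have hCZ (s ρ : ℝ) (hρ : 1 ≤ ρ) (hlow : s + 2 * ρ + 1 ≤ t + 8 * r)
      (hup : t + 8 * r ≤ s + 8 * ρ) :
      IsCZSet n (Q ×ˢ Ico (s - ρ) (s + ρ)) :=
    isCZSet_prod_Ico h.1 hρ (by linarith [Real.two_mul_exp_le_exp hlow])
      (hL₂.trans_le (Real.exp_le_exp.2 hup))
  have hR : IsCZSet n (czSet n Q t r) := hCZ t r hr (by linarith) (by linarith)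
  have hR'' : IsCZSet n (Q ×ˢ Ico (t - 5 * r) (t - r)) := by
    convert hCZ (t - 3 * r) (2 * r) (by linarith) (by linarith) (by linarith) using 3 <;> ring
  have hR₃ : IsCZSet n (Q ×ˢ Ico (t - 5 * r) (t + r)) := by
    convert hCZ (t - 2 * r) (3 * r) (by linarith) (by linarith) (by linarith) using 3 <;> ring
  have hunion :
      Q ×ˢ Ico (t - 5 * r) (t + r) = czSet n Q t r ∪ Q ×ˢ Ico (t - 5 * r) (t - r) := by
    rw [czSet, union_comm, ← prod_union, Ico_union_Ico_eq_Ico (by linarith) (by linarith)]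
  have hdisj : Disjoint (czSet n Q t r) (Q ×ˢ Ico (t - 5 * r) (t - r)) :=
    disjoint_prod.2 (Or.inr Ico_disjoint_Ico_same.symm)
  have hvol₂ : volume (Q ×ˢ Ico (t - 5 * r) (t - r)) = 2 * volume (czSet n Q t r) := by
    exact_mod_cast volume_prod_Ico_eq_mul Q 2 (by push_cast; ring)
  have hvol₃ : volume (Q ×ˢ Ico (t - 5 * r) (t + r)) = 3 * volume (czSet n Q t r) := by
    exact_mod_cast volume_prod_Ico_eq_mul Q 3 (by push_cast; ring)
  refine ⟨isParent_of_disjoint_union hR₃ hR hR'' hdisj hunion ?_ ?_, hR'', hunion, ?_, ?_,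
    isParent_of_disjoint_union hR₃ hR'' hR hdisj.symm (hunion.trans (union_comm _ _)) ?_ ?_⟩
  all_goals simp only [hvol₂, hvol₃]
  · gcongr
    exact ENNReal.half_le_self
  · rfl
  · rw [mul_comm, ENNReal.mul_div_cancel_right two_ne_zero ENNReal.ofNat_ne_top]
  · rw [mul_comm, ENNReal.mul_div_cancel_right three_ne_zero ENNReal.ofNat_ne_top]
  · rw [← mul_assoc, ENNReal.div_mul_cancel two_ne_zero ENNReal.ofNat_ne_top]
  · gcongr
    exact le_mul_of_one_le_left' one_le_two

/-- Let `R = Q × [t−r, t+r) ∈ ℛ` with `r ≥ 1` and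
`eᵗe^{8r}/2 ≤ L < eᵗe^{8r}`. Then `R₃ = Q × [t−5r, t+r)` is a parent of `R`; moreover
`R'' = Q × [t−5r, t−r)` belongs to `ℛ`, `R₃ = R ∪ R''`, `ρ(R) = ρ(R'')/2 = ρ(R₃)/3`, and
`R₃` is also a parent of `R''`. -/
theorem parent_vertical_down (n : ℕ) (hn : 1 ≤ n) (Q : Set (Fin n → ℝ)) (L : ℝ)
    (c : Fin n → ℝ) (t r : ℝ) (h : CZParam n Q L c t r) (hr : 1 ≤ r)
    (hL₁ : Real.exp t * Real.exp (8 * r) / 2 ≤ L)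
    (hL₂ : L < Real.exp t * Real.exp (8 * r)) :
    IsParent n (Q ×ˢ Set.Ico (t - 5 * r) (t + r)) (czSet n Q t r) ∧
    IsCZSet n (Q ×ˢ Set.Ico (t - 5 * r) (t - r)) ∧
    Q ×ˢ Set.Ico (t - 5 * r) (t + r) = czSet n Q t r ∪ Q ×ˢ Set.Ico (t - 5 * r) (t - r) ∧
    volume (czSet n Q t r) = volume (Q ×ˢ Set.Ico (t - 5 * r) (t - r)) / 2 ∧
    volume (czSet n Q t r) = volume (Q ×ˢ Set.Ico (t - 5 * r) (t + r)) / 3 ∧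
    IsParent n (Q ×ˢ Set.Ico (t - 5 * r) (t + r)) (Q ×ˢ Set.Ico (t - 5 * r) (t - r)) :=
  parent_vertical_down_general n Q L c t r h hr hL₁ hL₂
end
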